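/- arXiv:2201.00410 — 4 statements merged into one kernel-verified Lean document; each statement's English description precedes it below -/
import Mathlib

section
/- Fix an even integer κ ≥ 4. There exists a strictly decreasing sequence (E_n)_{n≥1} of real numbers such that: (i) cos²(π/κ) < E_n < cos(π/κ) for every n ≥ 1; (ii) E_n → cos²(π/κ) as n → ∞; and (iii) for every n ≥ 1, both E_{2n−1} and E_{2n} belong to 𝚯_{n,κ} (dimension 2). -/
open Real Filter

/-- Chebyshev polynomial of the first kind, as a real function. -/
noncomputable def chebT (n : ℕ) (x : ℝ) : ℝ := (Polynomial.Chebyshev.T ℝ n).eval x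

/-- Chebyshev polynomial of the second kind, as a real function. -/
noncomputable def chebU (n : ℕ) (x : ℝ) : ℝ := (Polynomial.Chebyshev.U ℝ n).eval x

/-- The function `g_{jκ}^E(x) = (E/x)(1-x²)U_{jκ-1}(x) + x(1-(E/x)²)U_{jκ-1}(E/x)`. -/
noncomputable def g (j κ : ℕ) (E x : ℝ) : ℝ :=
  (E / x) * (1 - x ^ 2) * chebU (j * κ - 1) x + x * (1 - (E / x) ^ 2) * chebU (j * κ - 1) (E / x)

/-- `E ∈ 𝚯_{m,κ}` (dimension 2). -/
def Theta2 (m κ : ℕ) (E : ℝ) : Prop :=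
  ∃ x : ℕ → ℝ, ∃ ω : ℕ → ℝ,
    (∀ q ≤ m, x q ≠ 0 ∧ |x q| ≤ 1 ∧ |E / x q| ≤ 1) ∧
    (∀ q < m, ω q ≤ 0) ∧
    (∀ j : ℕ, 1 ≤ j → g j κ E (x m) = ∑ q ∈ Finset.range m, ω q * g j κ E (x q))

namespace ThrAux

noncomputable def bstep (s E b : ℝ) : ℝ := Real.arccos (E / Real.cos (2*s - b))

noncomputable def bch (s b0 E : ℝ) : ℕ → ℝ
  | 0 => b0
  | q+1 => bstep s E (bch s b0 E q)

lemma arccos_anti : Antitone Real.arccos := by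
  intro x y h
  rw [Real.arccos, Real.arccos]
  have := Real.monotone_arcsin h
  linarith

section Basic

variable {s : ℝ} (hs : 0 < s) (h2s : 2*s ≤ π/2)

include hs h2s

lemma c_pos : 0 < Real.cos s := by
  apply Real.cos_pos_of_mem_Ioo
  constructor
  · linarith [Real.pi_pos]
  · linarith

omit h2s in
lemma c_lt_one (hsπ : s ≤ π) : Real.cos s < 1 := by
  have h := Real.cos_lt_cos_of_nonneg_of_le_pi (le_refl 0) hsπ hs
  simpa using h

omit hs h2s in
/-- key product bound: `cos b * cos (2s - b) ≤ cos s ^ 2` for all `b`. -/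
lemma prodle (b : ℝ) : Real.cos b * Real.cos (2*s - b) ≤ Real.cos s ^ 2 := by
  have h1 : Real.cos (b + (2*s - b)) = Real.cos b * Real.cos (2*s-b) - Real.sin b * Real.sin (2*s-b) :=
    Real.cos_add _ _
  have h2 : Real.cos (b - (2*s - b)) = Real.cos b * Real.cos (2*s-b) + Real.sin b * Real.sin (2*s-b) :=
    Real.cos_sub _ _
  have h3 : Real.cos (2*s) = 2 * Real.cos s ^ 2 - 1 := Real.cos_two_mul s
  have h4 : Real.cos (b - (2*s - b)) ≤ 1 := Real.cos_le_one _
  have h5 : b + (2*s - b) = 2*s := by ring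
  rw [h5] at h1
  nlinarith

omit h2s in
lemma cos_2s_lt_sq (hsπ : s < π) : Real.cos (2*s) < Real.cos s ^ 2 := by
  have h3 : Real.cos (2*s) = 2 * Real.cos s ^ 2 - 1 := Real.cos_two_mul s
  have h4 : Real.sin s > 0 := Real.sin_pos_of_pos_of_lt_pi hs hsπ
  nlinarith [Real.sin_sq_add_cos_sq s]

lemma den_pos {b : ℝ} (hb : 0 < b) (hbs : b ≤ 2*s) : 0 < Real.cos (2*s - b) := by
  apply Real.cos_pos_of_mem_Ioo
  constructor
  · linarith [Real.pi_pos]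
  · linarith

lemma den_lt_c {b : ℝ} (hb : 0 < b) (hbs : b < s) : Real.cos (2*s - b) < Real.cos s := by
  apply Real.cos_lt_cos_of_nonneg_of_le_pi (le_of_lt hs)
  · linarith [Real.pi_pos]
  · linarith

lemma step_basic {E b : ℝ} (hE1 : Real.cos s ^ 2 < E) (hb : 0 < b) (hbs : b < s)
    (hv : E < Real.cos (2*s - b)) :
    0 < bstep s E b ∧ bstep s E b < b ∧
      Real.cos (bstep s E b) = E / Real.cos (2*s - b) := by
  have hcpos := c_pos hs h2s
  have hd : 0 < Real.cos (2*s - b) := den_pos hs h2s hb (by linarith)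
  have hE0 : 0 < E := lt_of_le_of_lt (by positivity) hE1
  have hq1 : E / Real.cos (2*s - b) < 1 := (div_lt_one hd).2 hv
  have hq0 : 0 < E / Real.cos (2*s - b) := div_pos hE0 hd
  have hcos : Real.cos (bstep s E b) = E / Real.cos (2*s - b) :=
    Real.cos_arccos (by linarith) (le_of_lt hq1)
  refine ⟨Real.arccos_pos.2 hq1, ?_, hcos⟩
  have hgt : Real.cos b < Real.cos (bstep s E b) := by
    rw [hcos, lt_div_iff₀ hd]
    calc Real.cos b * Real.cos (2*s - b) ≤ Real.cos s ^2 := prodle b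
    _ < E := hE1
  by_contra hcon
  push_neg at hcon
  have : Real.cos (bstep s E b) ≤ Real.cos b :=
    Real.cos_le_cos_of_nonneg_of_le_pi (le_of_lt hb) (Real.arccos_le_pi _) hcon
  linarith

lemma step_mono_b {E b b' : ℝ} (hE : 0 ≤ E) (hb : 0 < b) (hb' : b ≤ b') (hb's : b' ≤ 2*s) :
    bstep s E b ≤ bstep s E b' := by
  have hd : 0 < Real.cos (2*s - b) := den_pos hs h2s hb (by linarith)
  have hd' : 0 < Real.cos (2*s - b') := den_pos hs h2s (lt_of_lt_of_le hb hb') hb's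
  have hdd : Real.cos (2*s - b) ≤ Real.cos (2*s - b') := by
    apply Real.cos_le_cos_of_nonneg_of_le_pi
    · linarith
    · linarith [Real.pi_pos]
    · linarith
  apply arccos_anti
  gcongr

/-- strict monotonicity: needs validity at the smaller angle. -/
lemma step_strict_mono_b {E b b' : ℝ} (hE : 0 < E) (hb : 0 < b) (hb' : b < b') (hb's : b' ≤ 2*s)
    (hv : E ≤ Real.cos (2*s - b)) :
    bstep s E b < bstep s E b' := by
  have hd : 0 < Real.cos (2*s - b) := den_pos hs h2s hb (by linarith)
  have hd' : 0 < Real.cos (2*s - b') := den_pos hs h2s (lt_of_lt_of_le hb (le_of_lt hb')) hb's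
  have hdd : Real.cos (2*s - b) < Real.cos (2*s - b') := by
    apply Real.cos_lt_cos_of_nonneg_of_le_pi
    · linarith
    · linarith [Real.pi_pos]
    · linarith
  have hq : E / Real.cos (2*s - b') < E / Real.cos (2*s - b) := by gcongr
  apply Real.strictAntiOn_arccos _ _ hq
  · constructor
    · have : 0 < E / Real.cos (2*s - b') := div_pos hE hd'; linarith
    · calc E / Real.cos (2*s-b') ≤ E / Real.cos (2*s-b) := le_of_lt hq
      _ ≤ 1 := (div_le_one hd).2 hv
  · constructor
    · have : 0 < E / Real.cos (2*s - b) := div_pos hE hd; linarith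
    · exact (div_le_one hd).2 hv

lemma step_mono_E {E E' b : ℝ} (hE : 0 ≤ E) (hEE' : E ≤ E') (hb : 0 < b) (hbs : b ≤ 2*s) :
    bstep s E' b ≤ bstep s E b := by
  have hd : 0 < Real.cos (2*s - b) := den_pos hs h2s hb hbs
  apply arccos_anti
  gcongr

end Basic

section Chain

variable {s : ℝ} (hs : 0 < s) (h2s : 2*s ≤ π/2)

include hs h2s

/-- Invariants of the chain under validity. -/
lemma chain_ok {E b0 : ℝ} (hE1 : Real.cos s ^ 2 < E) (hb00 : 0 < b0) (hb0s : b0 < s)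
    (k : ℕ) (hV : ∀ j < k, E < Real.cos (2*s - bch s b0 E j)) :
    ∀ i ≤ k, 0 < bch s b0 E i ∧ bch s b0 E i < s := by
  intro i hi
  induction i with
  | zero => exact ⟨hb00, hb0s⟩
  | succ n ih =>
    have hn : n ≤ k := le_of_lt (Nat.lt_of_succ_le hi)
    obtain ⟨h1, h2⟩ := ih (Nat.le_of_succ_le hi)
    have hv := hV n (Nat.lt_of_succ_le hi)
    obtain ⟨p1, p2, _⟩ := step_basic hs h2s hE1 h1 h2 hv
    exact ⟨p1, lt_trans p2 h2⟩

/-- The chain is strictly decreasing under validity. -/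
lemma chain_dec {E b0 : ℝ} (hE1 : Real.cos s ^ 2 < E) (hb00 : 0 < b0) (hb0s : b0 < s)
    (k : ℕ) (hV : ∀ j < k, E < Real.cos (2*s - bch s b0 E j)) :
    ∀ i < k, bch s b0 E (i+1) < bch s b0 E i := by
  intro i hi
  obtain ⟨h1, h2⟩ := chain_ok hs h2s hE1 hb00 hb0s k hV i (le_of_lt hi)
  exact (step_basic hs h2s hE1 h1 h2 (hV i hi)).2.1

/-- recursion identity. -/
lemma chain_cos {E b0 : ℝ} (hE1 : Real.cos s ^ 2 < E) (hb00 : 0 < b0) (hb0s : b0 < s)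
    (k : ℕ) (hV : ∀ j < k, E < Real.cos (2*s - bch s b0 E j)) :
    ∀ i < k, Real.cos (bch s b0 E (i+1)) = E / Real.cos (2*s - bch s b0 E i) := by
  intro i hi
  obtain ⟨h1, h2⟩ := chain_ok hs h2s hE1 hb00 hb0s k hV i (le_of_lt hi)
  exact (step_basic hs h2s hE1 h1 h2 (hV i hi)).2.2

/-- Comparison between two chains: smaller energy and larger start give larger chain,
    and validity transfers from the primed (larger-E, smaller-start) chain. -/
lemma chain_cmp
    {E E' b0 b0' : ℝ} (hE1 : Real.cos s ^ 2 < E) (hEE' : E ≤ E')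
    (hb0'0 : 0 < b0') (hb0's : b0' < s) (hb0b : b0' ≤ b0) (hb0s : b0 < s)
    (k : ℕ) (hV' : ∀ j < k, E' < Real.cos (2*s - bch s b0' E' j)) :
    ∀ i ≤ k, (∀ j < i, E < Real.cos (2*s - bch s b0 E j)) ∧
      bch s b0' E' i ≤ bch s b0 E i := by
  have hE'1 : Real.cos s ^ 2 < E' := lt_of_lt_of_le hE1 hEE'
  have hE0 : 0 < E := lt_of_le_of_lt (by positivity) hE1
  intro i hi
  induction i with
  | zero => exact ⟨fun j hj => absurd hj (Nat.not_lt_zero j), hb0b⟩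
  | succ n ih =>
    have hn : n ≤ k := Nat.le_of_succ_le hi
    obtain ⟨ihV, ihle⟩ := ih hn
    have hokU := chain_ok hs h2s hE1 (lt_of_lt_of_le hb0'0 hb0b) hb0s n ihV n le_rfl
    have hokP := chain_ok hs h2s hE'1 hb0'0 hb0's k hV' n hn
    -- validity of the unprimed chain at step n
    have hvU : E < Real.cos (2*s - bch s b0 E n) := by
      have hc : Real.cos (2*s - bch s b0' E' n) ≤ Real.cos (2*s - bch s b0 E n) := by
        apply Real.cos_le_cos_of_nonneg_of_le_pi
        · linarith [hokU.2]
        · linarith [Real.pi_pos, hokP.1]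
        · linarith
      have := hV' n (Nat.lt_of_succ_le hi)
      linarith
    have hVn1 : ∀ j < n+1, E < Real.cos (2*s - bch s b0 E j) := by
      intro j hj
      rcases Nat.lt_succ_iff_lt_or_eq.1 hj with h | h
      · exact ihV j h
      · subst h; exact hvU
    refine ⟨hVn1, ?_⟩
    show bstep s E' (bch s b0' E' n) ≤ bstep s E (bch s b0 E n)
    calc bstep s E' (bch s b0' E' n) ≤ bstep s E (bch s b0' E' n) :=
          step_mono_E hs h2s (le_of_lt hE0) hEE' hokP.1 (by linarith [hokP.2])
    _ ≤ bstep s E (bch s b0 E n) :=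
          step_mono_b hs h2s (le_of_lt hE0) hokP.1 ihle (by linarith [hokU.2])

/-- Strict comparison at equal energy. -/
lemma chain_cmp_strict
    {E b0 b0' : ℝ} (hE1 : Real.cos s ^ 2 < E)
    (hb0'0 : 0 < b0') (hb0's : b0' < s) (hb0b : b0' < b0) (hb0s : b0 < s)
    (k : ℕ) (hV' : ∀ j < k, E < Real.cos (2*s - bch s b0' E j)) :
    ∀ i ≤ k, bch s b0' E i < bch s b0 E i := by
  have hE0 : 0 < E := lt_of_le_of_lt (by positivity) hE1
  have hcmp := chain_cmp hs h2s hE1 (le_refl E) hb0'0 hb0's (le_of_lt hb0b) hb0s k hV'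
  intro i hi
  induction i with
  | zero => exact hb0b
  | succ n ih =>
    have hn : n ≤ k := Nat.le_of_succ_le hi
    have ihlt := ih hn
    have hokP := chain_ok hs h2s hE1 hb0'0 hb0's k hV' n hn
    have hokU := chain_ok hs h2s hE1 (lt_of_lt_of_le hb0'0 (le_of_lt hb0b)) hb0s n
      (hcmp n hn).1 n le_rfl
    show bstep s E (bch s b0' E n) < bstep s E (bch s b0 E n)
    exact step_strict_mono_b hs h2s hE0 hokP.1 ihlt (by linarith [hokU.2])
      (le_of_lt (hV' n (Nat.lt_of_succ_le hi)))

/-- Shift lemma: the D-chain one step ahead lies strictly below the B-chain,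
    where the B-chain starts at `arccos (E / cos s)`. -/
lemma chain_shift
    {E b0D : ℝ} (hE1 : Real.cos s ^ 2 < E) (hE2 : E < Real.cos s)
    (hb0D0 : 0 < b0D) (hb0Ds : b0D < s)
    (k : ℕ)
    (hVD : ∀ j < k+1, E < Real.cos (2*s - bch s b0D E j))
    (hVB : ∀ j < k, E < Real.cos (2*s - bch s (Real.arccos (E / Real.cos s)) E j)) :
    ∀ i ≤ k, bch s b0D E (i+1) < bch s (Real.arccos (E / Real.cos s)) E i := by
  have hc := c_pos hs h2s
  have hE0 : 0 < E := lt_of_le_of_lt (by positivity) hE1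
  set b0B := Real.arccos (E / Real.cos s) with hb0B
  have hq1 : E / Real.cos s < 1 := (div_lt_one hc).2 hE2
  have hq0 : 0 < E / Real.cos s := div_pos hE0 hc
  have hb0B0 : 0 < b0B := Real.arccos_pos.2 hq1
  have hb0Bs : b0B < s := by
    have : Real.cos s < E / Real.cos s := by
      rw [lt_div_iff₀ hc]; nlinarith
    have h := Real.strictAntiOn_arccos (Set.mem_Icc.2 ⟨by linarith [Real.neg_one_le_cos s], Real.cos_le_one s⟩)
      (Set.mem_Icc.2 ⟨by linarith, le_of_lt hq1⟩) this
    rwa [Real.arccos_cos (le_of_lt hs) (by linarith [Real.pi_pos])] at h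
  intro i hi
  induction i with
  | zero =>
    -- bstep s E b0D < b0B
    have hdD : 0 < Real.cos (2*s - b0D) := den_pos hs h2s hb0D0 (by linarith)
    have hdlt : Real.cos (2*s - b0D) < Real.cos s := den_lt_c hs h2s hb0D0 hb0Ds
    have hvD0 : E < Real.cos (2*s - b0D) := by
      have := hVD 0 (Nat.succ_pos k); exact this
    have hqq : E / Real.cos s < E / Real.cos (2*s - b0D) := by gcongr
    show Real.arccos (E / Real.cos (2*s - b0D)) < b0B
    rw [hb0B]
    apply Real.strictAntiOn_arccos _ _ hqq
    · exact Set.mem_Icc.2 ⟨by linarith, le_of_lt hq1⟩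
    · exact Set.mem_Icc.2 ⟨by linarith [div_pos hE0 hdD], le_of_lt ((div_lt_one hdD).2 hvD0)⟩
  | succ n ih =>
    have hn : n ≤ k := Nat.le_of_succ_le hi
    have ihlt := ih hn
    have hokD := chain_ok hs h2s hE1 hb0D0 hb0Ds (k+1) hVD (n+1) (by omega)
    have hokB := chain_ok hs h2s hE1 hb0B0 hb0Bs k hVB n hn
    show bstep s E (bch s b0D E (n+1)) < bstep s E (bch s b0B E n)
    exact step_strict_mono_b hs h2s hE0 hokD.1 ihlt (by linarith [hokB.2])
      (le_of_lt (hVD (n+1) (by omega)))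

omit hs h2s in
/-- Continuity of the chain in the energy variable. -/
lemma chain_contAt {b0f : ℝ → ℝ} {E₀ : ℝ} (hb0f : ContinuousAt b0f E₀) (i : ℕ)
    (hden : ∀ j < i, Real.cos (2*s - bch s (b0f E₀) E₀ j) ≠ 0) :
    ContinuousAt (fun E => bch s (b0f E) E i) E₀ := by
  induction i with
  | zero => exact hb0f
  | succ n ih =>
    have ihc : ContinuousAt (fun E => bch s (b0f E) E n) E₀ :=
      ih (fun j hj => hden j (Nat.lt_succ_of_lt hj))
    have hdc : ContinuousAt (fun E => Real.cos (2*s - bch s (b0f E) E n)) E₀ :=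
      Real.continuous_cos.continuousAt.comp (continuousAt_const.sub ihc)
    have hq : ContinuousAt (fun E => E / Real.cos (2*s - bch s (b0f E) E n)) E₀ :=
      ContinuousAt.div continuousAt_id hdc (hden n (Nat.lt_succ_self n))
    exact Real.continuous_arccos.continuousAt.comp hq

/-- At the bottom energy `cos s ^ 2`, the chain starting at `s` is constant `s`. -/
lemma chain_const (i : ℕ) : bch s s (Real.cos s ^ 2) i = s := by
  have hc := c_pos hs h2s
  induction i with
  | zero => rfl
  | succ n ih =>
    show bstep s (Real.cos s ^2) (bch s s (Real.cos s ^2) n) = s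
    rw [ih]
    unfold bstep
    have h1 : 2*s - s = s := by ring
    rw [h1]
    have h2 : Real.cos s ^ 2 / Real.cos s = Real.cos s := by
      field_simp
    rw [h2, Real.arccos_cos (le_of_lt hs) (by linarith [Real.pi_pos])]

end Chain

/-- The B-family chain (start `arccos (E / cos s)`). -/
noncomputable def chB (s E : ℝ) : ℕ → ℝ := bch s (Real.arccos (E / Real.cos s)) E
/-- The D-family chain (start `arccos √E`). -/
noncomputable def chD (s E : ℝ) : ℕ → ℝ := bch s (Real.arccos (Real.sqrt E)) E

section Families

variable {s : ℝ} (hs : 0 < s) (h2s : 2*s ≤ π/2)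

include hs h2s

lemma b0B_ok {E : ℝ} (hE1 : Real.cos s ^ 2 < E) (hE2 : E < Real.cos s) :
    0 < Real.arccos (E / Real.cos s) ∧ Real.arccos (E / Real.cos s) < s := by
  have hc := c_pos hs h2s
  have hE0 : 0 < E := lt_of_le_of_lt (by positivity) hE1
  have hq1 : E / Real.cos s < 1 := (div_lt_one hc).2 hE2
  refine ⟨Real.arccos_pos.2 hq1, ?_⟩
  have hlt : Real.cos s < E / Real.cos s := by
    rw [lt_div_iff₀ hc]; nlinarith
  have h := Real.strictAntiOn_arccos
    (Set.mem_Icc.2 ⟨by linarith [Real.neg_one_le_cos s], Real.cos_le_one s⟩)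
    (Set.mem_Icc.2 ⟨by linarith, le_of_lt hq1⟩) hlt
  rwa [Real.arccos_cos (le_of_lt hs) (by linarith [Real.pi_pos])] at h

lemma sqrt_gt_c {E : ℝ} (hE1 : Real.cos s ^ 2 < E) : Real.cos s < Real.sqrt E := by
  have hc := c_pos hs h2s
  have h := Real.sqrt_lt_sqrt (by positivity : (0:ℝ) ≤ Real.cos s ^ 2) hE1
  rwa [Real.sqrt_sq (le_of_lt hc)] at h

lemma b0D_ok {E : ℝ} (hE1 : Real.cos s ^ 2 < E) (hE2 : E < Real.cos s) :
    0 < Real.arccos (Real.sqrt E) ∧ Real.arccos (Real.sqrt E) < s := by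
  have hc := c_pos hs h2s
  have hc1 : Real.cos s < 1 := c_lt_one hs (by linarith [Real.pi_pos])
  have hsqgt : Real.cos s < Real.sqrt E := sqrt_gt_c hs h2s hE1
  have hE0 : 0 < E := lt_of_le_of_lt (by positivity) hE1
  have hsq1 : Real.sqrt E < 1 := by
    have : Real.sqrt E < Real.sqrt 1 := Real.sqrt_lt_sqrt (le_of_lt hE0) (by linarith)
    simpa using this
  refine ⟨Real.arccos_pos.2 hsq1, ?_⟩
  have h := Real.strictAntiOn_arccos
    (Set.mem_Icc.2 ⟨by linarith [Real.neg_one_le_cos s], Real.cos_le_one s⟩)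
    (Set.mem_Icc.2 ⟨by linarith [Real.sqrt_nonneg E], le_of_lt hsq1⟩) hsqgt
  rwa [Real.arccos_cos (le_of_lt hs) (by linarith [Real.pi_pos])] at h

lemma b0_cmp {E : ℝ} (hE1 : Real.cos s ^ 2 < E) (hE2 : E < Real.cos s) :
    Real.arccos (E / Real.cos s) < Real.arccos (Real.sqrt E) := by
  have hc := c_pos hs h2s
  have hE0 : 0 < E := lt_of_le_of_lt (by positivity) hE1
  have hsq0 : 0 < Real.sqrt E := Real.sqrt_pos.2 hE0
  have hsqgt : Real.cos s < Real.sqrt E := sqrt_gt_c hs h2s hE1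
  have hq1 : E / Real.cos s < 1 := (div_lt_one hc).2 hE2
  have hkey : Real.sqrt E < E / Real.cos s := by
    rw [lt_div_iff₀ hc]
    have hEsq : Real.sqrt E * Real.sqrt E = E := Real.mul_self_sqrt (le_of_lt hE0)
    nlinarith
  apply Real.strictAntiOn_arccos
    (Set.mem_Icc.2 ⟨by linarith, by nlinarith [Real.sqrt_nonneg E, hq1]⟩)
    (Set.mem_Icc.2 ⟨by linarith, le_of_lt hq1⟩) hkey

lemma chB_csq (i : ℕ) : chB s (Real.cos s ^ 2) i = s := by
  have hc := c_pos hs h2s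
  have h1 : Real.cos s ^2 / Real.cos s = Real.cos s := by field_simp
  unfold chB
  rw [h1, Real.arccos_cos (le_of_lt hs) (by linarith [Real.pi_pos])]
  exact chain_const hs h2s i

lemma chD_csq (i : ℕ) : chD s (Real.cos s ^ 2) i = s := by
  have hc := c_pos hs h2s
  have h1 : Real.sqrt (Real.cos s ^ 2) = Real.cos s := Real.sqrt_sq (le_of_lt hc)
  unfold chD
  rw [h1, Real.arccos_cos (le_of_lt hs) (by linarith [Real.pi_pos])]
  exact chain_const hs h2s i

omit hs h2s in
lemma chB_contAt {E₀ : ℝ} (i : ℕ)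
    (hden : ∀ j < i, Real.cos (2*s - chB s E₀ j) ≠ 0) :
    ContinuousAt (fun E => chB s E i) E₀ := by
  unfold chB
  exact chain_contAt
    (Real.continuous_arccos.continuousAt.comp ((continuous_id.div_const _).continuousAt)) i hden

omit hs h2s in
lemma chD_contAt {E₀ : ℝ} (i : ℕ)
    (hden : ∀ j < i, Real.cos (2*s - chD s E₀ j) ≠ 0) :
    ContinuousAt (fun E => chD s E i) E₀ := by
  unfold chD
  exact chain_contAt
    (Real.continuous_arccos.continuousAt.comp Real.continuous_sqrt.continuousAt) i hden

end Families

section LevelStep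

variable {s : ℝ} (hs : 0 < s) (h2s : 2*s ≤ π/2)

include hs h2s

/-- The main inductive step: given the previous threshold `u`, produce the next
pair of thresholds `θ < η` strictly inside `(cos²s, u)`. -/
lemma level_step (k : ℕ) (u : ℝ)
    (hu1 : Real.cos s ^ 2 < u) (hu2 : u ≤ Real.cos s)
    (hbase : (k = 0 ∧ u = Real.cos s) ∨
      (0 < k ∧ u < Real.cos s ∧ Real.cos (2*s - chB s u (k-1)) = u ∧
        (∀ j < k-1, u < Real.cos (2*s - chB s u j))))
    (hV : ∀ E, Real.cos s ^ 2 < E → E < u → ∀ j < k, E < Real.cos (2*s - chB s E j)) :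
    ∃ θ η : ℝ,
      Real.cos s ^ 2 < θ ∧ θ < η ∧ η < u ∧
      Real.cos (2*s - chB s θ k) = θ ∧ (∀ j < k, θ < Real.cos (2*s - chB s θ j)) ∧
      Real.cos (2*s - chD s η k) = η ∧ (∀ j < k, η < Real.cos (2*s - chD s η j)) ∧
      (∀ E, Real.cos s ^ 2 < E → E < θ → ∀ j < k+1, E < Real.cos (2*s - chB s E j)) := by
  have hsπ : s < π := by linarith [Real.pi_pos]
  have hc := c_pos hs h2s
  have hc1 : Real.cos s < 1 := c_lt_one hs (le_of_lt hsπ)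
  have hcsq : Real.cos s ^ 2 < Real.cos s := by nlinarith
  have hu0 : 0 < u := lt_of_le_of_lt (by positivity) hu1
  have h2slt : Real.cos (2*s) < Real.cos s ^ 2 := cos_2s_lt_sq hs hsπ
  -- (A) facts at u
  have hchBu : chB s u k = 0 := by
    rcases hbase with ⟨hk0, hueq⟩ | ⟨hkpos, hulc, hclose, hVu⟩
    · subst hk0
      show Real.arccos (u / Real.cos s) = 0
      rw [hueq, div_self (ne_of_gt hc), Real.arccos_one]
    · obtain ⟨k', rfl⟩ : ∃ k', k = k' + 1 := ⟨k - 1, (Nat.succ_pred_eq_of_pos hkpos).symm⟩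
      have hk' : k' + 1 - 1 = k' := rfl
      rw [hk'] at hclose
      show bstep s u (chB s u k') = 0
      unfold bstep
      rw [hclose, div_self (ne_of_gt hu0), Real.arccos_one]
  have hGBu : Real.cos (2*s - chB s u k) < u := by
    rw [hchBu]
    have : (2*s - 0) = 2*s := by ring
    rw [this]; linarith
  have hdenu : ∀ j < k, 0 < Real.cos (2*s - chB s u j) := by
    rcases hbase with ⟨hk0, _⟩ | ⟨hkpos, hulc, hclose, hVu⟩
    · subst hk0; intro j hj; omega
    · intro j hj
      rcases Nat.lt_succ_iff_lt_or_eq.1 (by omega : j < (k-1) + 1) with h | h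
      · linarith [hVu j h]
      · subst h; rw [hclose]; exact hu0
  -- B-chain validity at u (strictly), up to k-1
  have hVBu : ∀ j < k-1, u < Real.cos (2*s - chB s u j) := by
    rcases hbase with ⟨hk0, _⟩ | ⟨hkpos, hulc, hclose, hVu⟩
    · subst hk0; intro j hj; omega
    · exact hVu
  -- (A') D-facts at u
  have hVDu : ∀ j < k, u < Real.cos (2*s - chD s u j) := by
    rcases hbase with ⟨hk0, hueq⟩ | ⟨hkpos, hulc, hclose, hVu⟩
    · subst hk0; intro j hj; omega
    · obtain ⟨k', rfl⟩ : ∃ k', k = k' + 1 := ⟨k - 1, (Nat.succ_pred_eq_of_pos hkpos).symm⟩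
      have hk' : k' + 1 - 1 = k' := rfl
      rw [hk'] at hclose hVu
      have hokB0 := b0B_ok hs h2s hu1 hulc
      have hokD0 := b0D_ok hs h2s hu1 hulc
      have hcmp0 := b0_cmp hs h2s hu1 hulc
      have hcmp := chain_cmp hs h2s hu1 (le_refl u) hokB0.1 hokB0.2 (le_of_lt hcmp0)
        hokD0.2 k' hVu
      have hVDu' : ∀ j < k', u < Real.cos (2*s - chD s u j) := fun j hj => ((hcmp k' le_rfl).1) j hj
      have hstrict : chB s u k' < chD s u k' :=
        chain_cmp_strict hs h2s hu1 hokB0.1 hokB0.2 hcmp0 hokD0.2 k' hVu k' le_rfl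
      have hokBk' : 0 < chB s u k' ∧ chB s u k' < s :=
        chain_ok hs h2s hu1 hokB0.1 hokB0.2 k' hVu k' le_rfl
      have hokDk' : 0 < chD s u k' ∧ chD s u k' < s :=
        chain_ok hs h2s hu1 hokD0.1 hokD0.2 k' hVDu' k' le_rfl
      have hVDuk' : u < Real.cos (2*s - chD s u k') := by
        have hcc : Real.cos (2*s - chB s u k') < Real.cos (2*s - chD s u k') := by
          apply Real.cos_lt_cos_of_nonneg_of_le_pi
          · linarith [hokDk'.2]
          · linarith [hokBk'.1]
          · linarith
        rw [hclose] at hcc; exact hcc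
      intro j hj
      rcases Nat.lt_succ_iff_lt_or_eq.1 hj with h | h
      · exact hVDu' j h
      · subst h; exact hVDuk'
  have hGDu : Real.cos (2*s - chD s u k) < u := by
    rcases hbase with ⟨hk0, hueq⟩ | ⟨hkpos, hulc, hclose, hVu⟩
    · -- base case: k = 0, u = cos s
      subst hk0
      have hsq1 : Real.sqrt (Real.cos s) < 1 := by
        have : Real.sqrt (Real.cos s) < Real.sqrt 1 :=
          Real.sqrt_lt_sqrt (le_of_lt hc) (by linarith)
        simpa using this
      have hsqgt : Real.cos s < Real.sqrt (Real.cos s) := by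
        have h := Real.sqrt_lt_sqrt (by positivity : (0:ℝ) ≤ Real.cos s ^2)
          (show Real.cos s ^2 < Real.cos s from hcsq)
        rwa [Real.sqrt_sq (le_of_lt hc)] at h
      have harc : Real.arccos (Real.sqrt (Real.cos s)) < s := by
        have h := Real.strictAntiOn_arccos
          (Set.mem_Icc.2 ⟨by linarith [Real.neg_one_le_cos s], Real.cos_le_one s⟩)
          (Set.mem_Icc.2 ⟨by linarith [Real.sqrt_nonneg (Real.cos s)], le_of_lt hsq1⟩)
          (by rw [hueq] at *; exact hsqgt)
        rwa [Real.arccos_cos (le_of_lt hs) (le_of_lt hsπ)] at h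
      show Real.cos (2*s - chD s u 0) < u
      have hch : chD s u 0 = Real.arccos (Real.sqrt u) := rfl
      rw [hch, hueq]
      calc Real.cos (2*s - Real.arccos (Real.sqrt (Real.cos s))) < Real.cos s := by
            apply Real.cos_lt_cos_of_nonneg_of_le_pi (le_of_lt hs)
            · have := Real.arccos_nonneg (Real.sqrt (Real.cos s)); linarith
            · linarith
      _ = Real.cos s := rfl
    · -- step case: use the shift lemma
      obtain ⟨k', rfl⟩ : ∃ k', k = k' + 1 := ⟨k - 1, (Nat.succ_pred_eq_of_pos hkpos).symm⟩
      have hk' : k' + 1 - 1 = k' := rfl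
      rw [hk'] at hclose hVu
      have hokB0 := b0B_ok hs h2s hu1 hulc
      have hokD0 := b0D_ok hs h2s hu1 hulc
      have hokBk' : 0 < chB s u k' ∧ chB s u k' < s :=
        chain_ok hs h2s hu1 hokB0.1 hokB0.2 k' hVu k' le_rfl
      have hVD : ∀ j < k'+1, u < Real.cos (2*s - chD s u j) := hVDu
      have hshift : chD s u (k'+1) < chB s u k' :=
        chain_shift hs h2s hu1 hulc hokD0.1 hokD0.2 k' hVD hVu k' le_rfl
      -- conclude
      have hcc : Real.cos (2*s - chD s u (k'+1)) < Real.cos (2*s - chB s u k') := by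
        have hokD1 : 0 < chD s u (k'+1) ∧ chD s u (k'+1) < s :=
          chain_ok hs h2s hu1 hokD0.1 hokD0.2 (k'+1) hVD (k'+1) le_rfl
        apply Real.cos_lt_cos_of_nonneg_of_le_pi
        · linarith [hokBk'.2]
        · linarith [hokD1.1]
        · linarith
      rw [hclose] at hcc; exact hcc
  -- (B) pick a left endpoint E₁ near cos²s where both gap functions are positive
  set c2 : ℝ := Real.cos s ^ 2 with hc2
  have hc20 : (0:ℝ) < c2 := by rw [hc2]; nlinarith
  have hGB_cont : ContinuousAt (fun E => Real.cos (2*s - chB s E k) - E) c2 := by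
    have hden : ∀ j < k, Real.cos (2*s - chB s c2 j) ≠ 0 := by
      intro j hj
      rw [chB_csq hs h2s j, show 2*s - s = s by ring]
      exact ne_of_gt hc
    exact (Real.continuous_cos.continuousAt.comp
      (continuousAt_const.sub (chB_contAt k hden))).sub continuousAt_id
  have hGD_cont : ContinuousAt (fun E => Real.cos (2*s - chD s E k) - E) c2 := by
    have hden : ∀ j < k, Real.cos (2*s - chD s c2 j) ≠ 0 := by
      intro j hj
      rw [chD_csq hs h2s j, show 2*s - s = s by ring]
      exact ne_of_gt hc
    exact (Real.continuous_cos.continuousAt.comp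
      (continuousAt_const.sub (chD_contAt k hden))).sub continuousAt_id
  have hGB_pos : 0 < Real.cos (2*s - chB s c2 k) - c2 := by
    rw [chB_csq hs h2s k, show 2*s - s = s by ring]; nlinarith
  have hGD_pos : 0 < Real.cos (2*s - chD s c2 k) - c2 := by
    rw [chD_csq hs h2s k, show 2*s - s = s by ring]; nlinarith
  have hmemB : (fun E => Real.cos (2*s - chB s E k) - E) ⁻¹' Set.Ioi 0 ∈ nhds c2 :=
    hGB_cont (Ioi_mem_nhds hGB_pos)
  have hmemD : (fun E => Real.cos (2*s - chD s E k) - E) ⁻¹' Set.Ioi 0 ∈ nhds c2 :=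
    hGD_cont (Ioi_mem_nhds hGD_pos)
  obtain ⟨ε, hε, hball⟩ := Metric.mem_nhds_iff.1 (Filter.inter_mem hmemB hmemD)
  set E₁ : ℝ := c2 + min (ε/2) ((u - c2)/2) with hE₁def
  have hminpos : 0 < min (ε/2) ((u - c2)/2) := lt_min (by linarith) (by linarith)
  have hE₁gt : c2 < E₁ := by simp only [hE₁def]; linarith
  have hE₁lt : E₁ < u := by
    have h1 : min (ε/2) ((u - c2)/2) ≤ (u - c2)/2 := min_le_right _ _
    simp only [hE₁def]; linarith
  have hE₁ball : E₁ ∈ Metric.ball c2 ε := by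
    rw [Metric.mem_ball, Real.dist_eq, abs_of_pos (by linarith)]
    have h1 : min (ε/2) ((u - c2)/2) ≤ ε/2 := min_le_left _ _
    simp only [hE₁def]; linarith
  obtain ⟨hGBE₁, hGDE₁⟩ := hball hE₁ball
  rw [Set.mem_preimage, Set.mem_Ioi] at hGBE₁ hGDE₁
  -- (C) IVT for the B-family root θ
  have hVext : ∀ x, c2 < x → x ≤ u → ∀ j < k, 0 < Real.cos (2*s - chB s x j) := by
    intro x hx1 hx2 j hj
    rcases eq_or_lt_of_le hx2 with h | h
    · subst h; exact hdenu j hj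
    · have := hV x hx1 h j hj; linarith
  have hcontB_Icc : ContinuousOn (fun E => Real.cos (2*s - chB s E k) - E) (Set.Icc E₁ u) := by
    intro x hx
    have hden : ∀ j < k, Real.cos (2*s - chB s x j) ≠ 0 :=
      fun j hj => ne_of_gt (hVext x (lt_of_lt_of_le hE₁gt hx.1) hx.2 j hj)
    exact ((Real.continuous_cos.continuousAt.comp
      (continuousAt_const.sub (chB_contAt k hden))).sub continuousAt_id).continuousWithinAt
  have hivtB := intermediate_value_Icc' (le_of_lt hE₁lt) hcontB_Icc
  have h0memB : (0:ℝ) ∈ Set.Icc (Real.cos (2*s - chB s u k) - u) (Real.cos (2*s - chB s E₁ k) - E₁) :=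
    Set.mem_Icc.2 ⟨by linarith, by linarith⟩
  obtain ⟨θ, hθmem, hθeq⟩ := hivtB h0memB
  have hclθ : Real.cos (2*s - chB s θ k) = θ := by
    have : Real.cos (2*s - chB s θ k) - θ = 0 := hθeq
    linarith
  have hθne1 : θ ≠ E₁ := by
    intro h; rw [h] at hclθ; linarith
  have hθneu : θ ≠ u := by
    intro h; rw [h] at hclθ; linarith
  have hθlt : θ < u := lt_of_le_of_ne hθmem.2 hθneu
  have hθgt : c2 < θ := lt_of_lt_of_le hE₁gt (hθmem.1)
  have hVBθ : ∀ j < k, θ < Real.cos (2*s - chB s θ j) := hV θ hθgt hθlt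
  -- (D) IVT for the D-family root η
  have hVDext : ∀ x, c2 < x → x < u → ∀ j < k, x < Real.cos (2*s - chD s x j) := by
    intro x hx1 hx2
    have hxc : x < Real.cos s := lt_of_lt_of_le hx2 hu2
    have hokB0 := b0B_ok hs h2s hx1 hxc
    have hokD0 := b0D_ok hs h2s hx1 hxc
    have hcmp0 := b0_cmp hs h2s hx1 hxc
    have hcmp := chain_cmp hs h2s hx1 (le_refl x) hokB0.1 hokB0.2 (le_of_lt hcmp0)
      hokD0.2 k (hV x hx1 hx2)
    exact (hcmp k le_rfl).1
  have hcontD_Icc : ContinuousOn (fun E => Real.cos (2*s - chD s E k) - E) (Set.Icc E₁ u) := by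
    intro x hx
    have hx1 : c2 < x := lt_of_lt_of_le hE₁gt hx.1
    have hden : ∀ j < k, Real.cos (2*s - chD s x j) ≠ 0 := by
      intro j hj
      rcases eq_or_lt_of_le hx.2 with h | h
      · subst h; exact ne_of_gt (lt_trans hu0 (hVDu j hj))
      · exact ne_of_gt (lt_trans (lt_of_le_of_lt (by positivity) hx1) (hVDext x hx1 h j hj))
    exact ((Real.continuous_cos.continuousAt.comp
      (continuousAt_const.sub (chD_contAt k hden))).sub continuousAt_id).continuousWithinAt
  have hivtD := intermediate_value_Icc' (le_of_lt hE₁lt) hcontD_Icc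
  have h0memD : (0:ℝ) ∈ Set.Icc (Real.cos (2*s - chD s u k) - u) (Real.cos (2*s - chD s E₁ k) - E₁) :=
    Set.mem_Icc.2 ⟨by linarith, by linarith⟩
  obtain ⟨η, hηmem, hηeq⟩ := hivtD h0memD
  have hclη : Real.cos (2*s - chD s η k) = η := by
    have : Real.cos (2*s - chD s η k) - η = 0 := hηeq
    linarith
  have hηne1 : η ≠ E₁ := by
    intro h; rw [h] at hclη; linarith
  have hηneu : η ≠ u := by
    intro h; rw [h] at hclη; linarith
  have hηlt : η < u := lt_of_le_of_ne hηmem.2 hηneu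
  have hηgt : c2 < η := lt_of_lt_of_le hE₁gt (hηmem.1)
  have hVDη : ∀ j < k, η < Real.cos (2*s - chD s η j) := hVDext η hηgt hηlt
  -- (E) ordering θ < η
  have hθc : θ < Real.cos s := lt_of_lt_of_le hθlt hu2
  have hηc : η < Real.cos s := lt_of_lt_of_le hηlt hu2
  have hθltη : θ < η := by
    by_contra hcon
    push_neg at hcon  -- hcon : η ≤ θ
    have hokB0θ := b0B_ok hs h2s hθgt hθc
    have hokD0θ := b0D_ok hs h2s hθgt hθc
    have hokD0η := b0D_ok hs h2s hηgt hηc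
    have hcmp0θ := b0_cmp hs h2s hθgt hθc
    have hVDθ : ∀ j < k, θ < Real.cos (2*s - chD s θ j) := hVDext θ hθgt hθlt
    -- strict comparison of the two chains at θ
    have hstrictθ : chB s θ k < chD s θ k :=
      chain_cmp_strict hs h2s hθgt hokB0θ.1 hokB0θ.2 hcmp0θ hokD0θ.2 k hVBθ k le_rfl
    have hokBθk : 0 < chB s θ k ∧ chB s θ k < s :=
      chain_ok hs h2s hθgt hokB0θ.1 hokB0θ.2 k hVBθ k le_rfl
    have hokDθk : 0 < chD s θ k ∧ chD s θ k < s :=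
      chain_ok hs h2s hθgt hokD0θ.1 hokD0θ.2 k hVDθ k le_rfl
    have hgtθ : θ < Real.cos (2*s - chD s θ k) := by
      have hcc : Real.cos (2*s - chB s θ k) < Real.cos (2*s - chD s θ k) := by
        apply Real.cos_lt_cos_of_nonneg_of_le_pi
        · linarith [hokDθk.2]
        · linarith [hokBθk.1]
        · linarith
      rw [hclθ] at hcc; exact hcc
    -- comparison between the D-chains at η and θ
    have hstart : Real.arccos (Real.sqrt θ) ≤ Real.arccos (Real.sqrt η) :=
      arccos_anti (Real.sqrt_le_sqrt hcon)
    have hcmpηθ := chain_cmp hs h2s hηgt hcon hokD0θ.1 hokD0θ.2 hstart hokD0η.2 k hVDθ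
    have hle : chD s θ k ≤ chD s η k := (hcmpηθ k le_rfl).2
    have hokDηk : 0 < chD s η k ∧ chD s η k < s :=
      chain_ok hs h2s hηgt hokD0η.1 hokD0η.2 k hVDη k le_rfl
    have hcc2 : Real.cos (2*s - chD s θ k) ≤ Real.cos (2*s - chD s η k) := by
      apply Real.cos_le_cos_of_nonneg_of_le_pi
      · linarith [hokDηk.2]
      · linarith [hokDθk.1]
      · linarith
    rw [hclη] at hcc2
    linarith
  -- (F) next-level validity below θ
  have hVnext : ∀ E, c2 < E → E < θ → ∀ j < k+1, E < Real.cos (2*s - chB s E j) := by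
    intro E hE1 hE2 j hj
    have hEu : E < u := lt_trans hE2 hθlt
    rcases Nat.lt_succ_iff_lt_or_eq.1 hj with h | h
    · exact hV E hE1 hEu j h
    · subst h
      have hEc : E < Real.cos s := lt_of_lt_of_le hEu hu2
      have hokB0E := b0B_ok hs h2s hE1 hEc
      have hokB0θ := b0B_ok hs h2s hθgt hθc
      have hstart : Real.arccos (θ / Real.cos s) ≤ Real.arccos (E / Real.cos s) := by
        apply arccos_anti
        gcongr
      have hcmp := chain_cmp hs h2s hE1 (le_of_lt hE2) hokB0θ.1 hokB0θ.2 hstart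
        hokB0E.2 j hVBθ
      have hle : chB s θ j ≤ chB s E j := (hcmp j le_rfl).2
      have hokBθj : 0 < chB s θ j ∧ chB s θ j < s :=
        chain_ok hs h2s hθgt hokB0θ.1 hokB0θ.2 j hVBθ j le_rfl
      have hokBEj : 0 < chB s E j ∧ chB s E j < s :=
        chain_ok hs h2s hE1 hokB0E.1 hokB0E.2 j ((hcmp j le_rfl).1) j le_rfl
      have hcc : Real.cos (2*s - chB s θ j) ≤ Real.cos (2*s - chB s E j) := by
        apply Real.cos_le_cos_of_nonneg_of_le_pi
        · linarith [hokBEj.2]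
        · linarith [hokBθj.1]
        · linarith
      calc E < θ := hE2
      _ = Real.cos (2*s - chB s θ j) := hclθ.symm
      _ ≤ Real.cos (2*s - chB s E j) := hcc
  exact ⟨θ, η, hθgt, hθltη, hηlt, hclθ, hVBθ, hclη, hVDη, hVnext⟩

end LevelStep

section Construction

variable {s : ℝ}

/-- Invariant for the recursively constructed triple (θ_k, η_k, previous θ). -/
def Good (s : ℝ) (k : ℕ) (p : ℝ × ℝ × ℝ) : Prop :=
  Real.cos s ^ 2 < p.1 ∧ p.1 < p.2.1 ∧ p.2.1 < p.2.2 ∧ p.2.2 ≤ Real.cos s ∧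
  p.1 < Real.cos s ∧
  Real.cos (2*s - chB s p.1 k) = p.1 ∧ (∀ j < k, p.1 < Real.cos (2*s - chB s p.1 j)) ∧
  Real.cos (2*s - chD s p.2.1 k) = p.2.1 ∧ (∀ j < k, p.2.1 < Real.cos (2*s - chD s p.2.1 j)) ∧
  (∀ E, Real.cos s ^ 2 < E → E < p.1 → ∀ j < k+1, E < Real.cos (2*s - chB s E j))

variable (hs : 0 < s) (h2s : 2*s ≤ π/2)

noncomputable def seq0 : {p : ℝ × ℝ × ℝ // Good s 0 p} :=
  have hc : 0 < Real.cos s := c_pos hs h2s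
  have hc1 : Real.cos s < 1 := c_lt_one hs (by linarith [Real.pi_pos])
  have hcsq : Real.cos s ^2 < Real.cos s := by nlinarith
  have h := level_step hs h2s 0 (Real.cos s) hcsq le_rfl (Or.inl ⟨rfl, rfl⟩)
    (fun E _ _ j hj => absurd hj (Nat.not_lt_zero j))
  ⟨(h.choose, h.choose_spec.choose, Real.cos s), by
    obtain ⟨h1, h2, h3, h4, h5, h6, h7, h8⟩ := h.choose_spec.choose_spec
    exact ⟨h1, h2, h3, le_rfl, by show h.choose < Real.cos s; linarith, h4, h5, h6, h7, h8⟩⟩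

noncomputable def seqStep (k : ℕ) (prev : {p : ℝ × ℝ × ℝ // Good s k p}) :
    {p : ℝ × ℝ × ℝ // Good s (k+1) p} :=
  have hg := prev.2
  have h := level_step hs h2s (k+1) prev.1.1 hg.1 (le_of_lt hg.2.2.2.2.1)
    (Or.inr ⟨Nat.succ_pos k, hg.2.2.2.2.1, hg.2.2.2.2.2.1, hg.2.2.2.2.2.2.1⟩)
    hg.2.2.2.2.2.2.2.2.2
  ⟨(h.choose, h.choose_spec.choose, prev.1.1), by
    obtain ⟨h1, h2, h3, h4, h5, h6, h7, h8⟩ := h.choose_spec.choose_spec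
    exact ⟨h1, h2, h3, le_of_lt hg.2.2.2.2.1,
      by show h.choose < Real.cos s; linarith [hg.2.2.2.2.1], h4, h5, h6, h7, h8⟩⟩

noncomputable def seqf : ∀ k : ℕ, {p : ℝ × ℝ × ℝ // Good s k p} :=
  fun k => Nat.rec (seq0 hs h2s) (fun k prev => seqStep hs h2s k prev) k

/-- θ-sequence. -/
noncomputable def th (k : ℕ) : ℝ := (seqf hs h2s k).1.1
/-- η-sequence. -/
noncomputable def et (k : ℕ) : ℝ := (seqf hs h2s k).1.2.1

lemma seq_link (k : ℕ) : (seqf hs h2s (k+1)).1.2.2 = th hs h2s k := rfl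

lemma seq_base : (seqf hs h2s 0).1.2.2 = Real.cos s := rfl

lemma th_good (k : ℕ) : Good s k (seqf hs h2s k).1 := (seqf hs h2s k).2

lemma th_lt_et (k : ℕ) : th hs h2s k < et hs h2s k := (th_good hs h2s k).2.1

lemma et_lt_th (k : ℕ) : et hs h2s (k+1) < th hs h2s k := by
  have h := (th_good hs h2s (k+1)).2.2.1
  rwa [seq_link hs h2s k] at h

lemma et_lt_c (k : ℕ) : et hs h2s k < Real.cos s := by
  have h : et hs h2s k < (seqf hs h2s k).1.2.2 := (th_good hs h2s k).2.2.1
  have h2 := (th_good hs h2s k).2.2.2.1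
  linarith

lemma th_gt (k : ℕ) : Real.cos s ^ 2 < th hs h2s k := (th_good hs h2s k).1

lemma th_succ_lt (k : ℕ) : th hs h2s (k+1) < th hs h2s k :=
  lt_trans (th_lt_et hs h2s (k+1)) (et_lt_th hs h2s k)

lemma th_anti : Antitone (th hs h2s) :=
  antitone_nat_of_succ_le (fun k => le_of_lt (th_succ_lt hs h2s k))

lemma th_lt_c (k : ℕ) : th hs h2s k < Real.cos s := (th_good hs h2s k).2.2.2.2.1

lemma th_closing (k : ℕ) : Real.cos (2*s - chB s (th hs h2s k) k) = th hs h2s k :=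
  (th_good hs h2s k).2.2.2.2.2.1

lemma th_valid (k : ℕ) : ∀ j < k, th hs h2s k < Real.cos (2*s - chB s (th hs h2s k) j) :=
  (th_good hs h2s k).2.2.2.2.2.2.1

lemma et_closing (k : ℕ) : Real.cos (2*s - chD s (et hs h2s k) k) = et hs h2s k :=
  (th_good hs h2s k).2.2.2.2.2.2.2.1

lemma et_valid (k : ℕ) : ∀ j < k, et hs h2s k < Real.cos (2*s - chD s (et hs h2s k) j) :=
  (th_good hs h2s k).2.2.2.2.2.2.2.2.1

lemma th_vnext (k : ℕ) : ∀ E, Real.cos s ^ 2 < E → E < th hs h2s k →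
    ∀ j < k+1, E < Real.cos (2*s - chB s E j) :=
  (th_good hs h2s k).2.2.2.2.2.2.2.2.2

/-- The θ-sequence converges to `cos² s`. -/
lemma th_tendsto : Tendsto (th hs h2s) atTop (nhds (Real.cos s ^ 2)) := by
  have hsπ : s < π := by linarith [Real.pi_pos]
  have hc := c_pos hs h2s
  have hbdd : BddBelow (Set.range (th hs h2s)) :=
    ⟨Real.cos s ^ 2, by rintro x ⟨k, rfl⟩; exact le_of_lt (th_gt hs h2s k)⟩
  have hL := tendsto_atTop_ciInf (th_anti hs h2s) hbdd
  set L := ⨅ k, th hs h2s k with hLdef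
  have hLge : Real.cos s ^ 2 ≤ L := le_ciInf (fun k => le_of_lt (th_gt hs h2s k))
  rcases eq_or_lt_of_le hLge with h | hLgt
  · rwa [← h] at hL
  · exfalso
    have hLlt : ∀ k, L < th hs h2s k := fun k =>
      lt_of_le_of_lt (ciInf_le hbdd (k+1)) (th_succ_lt hs h2s k)
    have hLc : L < Real.cos s := lt_trans (hLlt 0) (th_lt_c hs h2s 0)
    have hVL : ∀ j, L < Real.cos (2*s - chB s L j) := fun j =>
      th_vnext hs h2s j L hLgt (hLlt j) j (Nat.lt_succ_self j)
    have hokB0 := b0B_ok hs h2s hLgt hLc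
    set w : ℕ → ℝ := chB s L with hwdef
    have hwOk : ∀ i, 0 < w i ∧ w i < s := fun i =>
      chain_ok hs h2s hLgt hokB0.1 hokB0.2 i (fun j hj => hVL j) i le_rfl
    have hwdec : ∀ i, w (i+1) < w i := fun i =>
      chain_dec hs h2s hLgt hokB0.1 hokB0.2 (i+1) (fun j hj => hVL j) i (Nat.lt_succ_self i)
    -- lower bound on the chain
    have hL1 : L ≤ 1 := by nlinarith [Real.cos_le_one s]
    have htlb : ∀ i, 2*s - Real.arccos L < w i := by
      intro i
      have h1 : Real.arccos (Real.cos (2*s - w i)) < Real.arccos L := by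
        apply Real.strictAntiOn_arccos
          (Set.mem_Icc.2 ⟨by nlinarith [Real.neg_one_le_cos s], hL1⟩)
          (Set.mem_Icc.2 ⟨Real.neg_one_le_cos _, Real.cos_le_one _⟩) (hVL i)
      rw [Real.arccos_cos (by linarith [(hwOk i).2]) (by linarith [(hwOk i).1, Real.pi_pos])] at h1
      linarith
    have htpos : 0 < 2*s - Real.arccos L := by
      have h2slt := cos_2s_lt_sq hs hsπ
      have h1 : Real.arccos L < Real.arccos (Real.cos (2*s)) := by
        apply Real.strictAntiOn_arccos
          (Set.mem_Icc.2 ⟨Real.neg_one_le_cos _, Real.cos_le_one _⟩)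
          (Set.mem_Icc.2 ⟨by nlinarith [Real.neg_one_le_cos s], hL1⟩) (by linarith)
      rw [Real.arccos_cos (by linarith) (by linarith)] at h1
      linarith
    -- the chain converges to a fixed point
    have hwbdd : BddBelow (Set.range w) :=
      ⟨2*s - Real.arccos L, by rintro x ⟨i, rfl⟩; exact le_of_lt (htlb i)⟩
    have hwanti : Antitone w := antitone_nat_of_succ_le (fun i => le_of_lt (hwdec i))
    have hwT := tendsto_atTop_ciInf hwanti hwbdd
    set β : ℝ := ⨅ i, w i with hβdef
    have hβlb : 2*s - Real.arccos L ≤ β := le_ciInf (fun i => le_of_lt (htlb i))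
    have hβub : β ≤ w 0 := ciInf_le hwbdd 0
    have hβs : β < s := lt_of_le_of_lt hβub (hwOk 0).2
    have hdβ : 0 < Real.cos (2*s - β) := by
      apply Real.cos_pos_of_mem_Ioo
      constructor
      · linarith [Real.pi_pos]
      · linarith [Real.arccos_le_pi L]
    have hrecw : ∀ i, w (i+1) = Real.arccos (L / Real.cos (2*s - w i)) := fun i => rfl
    have hcont : ContinuousAt (fun b => Real.arccos (L / Real.cos (2*s - b))) β :=
      Real.continuous_arccos.continuousAt.comp
        (ContinuousAt.div continuousAt_const
          (Real.continuous_cos.continuousAt.comp (continuousAt_const.sub continuousAt_id))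
          (ne_of_gt hdβ))
    have h1 : Tendsto (fun i => Real.arccos (L / Real.cos (2*s - w i))) atTop
        (nhds (Real.arccos (L / Real.cos (2*s - β)))) := hcont.tendsto.comp hwT
    have h1' : Tendsto (fun i => w (i+1)) atTop
        (nhds (Real.arccos (L / Real.cos (2*s - β)))) := by
      simpa only [← hrecw] using h1
    have h2 : Tendsto (fun i => w (i+1)) atTop (nhds β) := hwT.comp (tendsto_add_atTop_nat 1)
    have hfix : Real.arccos (L / Real.cos (2*s - β)) = β := tendsto_nhds_unique h1' h2
    have hc1 : Tendsto (fun i => Real.cos (2*s - w i)) atTop (nhds (Real.cos (2*s - β))) :=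
      (Real.continuous_cos.continuousAt.comp
        (continuousAt_const.sub continuousAt_id)).tendsto.comp hwT
    have hLle : L ≤ Real.cos (2*s - β) := ge_of_tendsto' hc1 (fun i => le_of_lt (hVL i))
    have hL0 : 0 < L := by nlinarith
    have hcosβ : Real.cos β = L / Real.cos (2*s - β) := by
      have h0 : 0 ≤ L / Real.cos (2*s - β) := le_of_lt (div_pos hL0 hdβ)
      have h := Real.cos_arccos (x := L / Real.cos (2*s - β)) (by linarith)
        ((div_le_one hdβ).2 hLle)
      rw [hfix] at h
      exact h
    have hprodL : Real.cos β * Real.cos (2*s - β) = L := by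
      rw [hcosβ]; field_simp
    have hple := prodle (s := s) β
    linarith

end Construction

end ThrAux


namespace ThrAux

/-- Chebyshev evaluation: `(1 - cos²t)·U_{n-1}(cos t) = sin t · sin(n t)`. -/
lemma cheb_eval (n : ℕ) (hn : 1 ≤ n) (t : ℝ) :
    (1 - Real.cos t ^ 2) * chebU (n - 1) (Real.cos t) = Real.sin t * Real.sin ((n : ℝ) * t) := by
  have h := Polynomial.Chebyshev.U_real_cos t ((n : ℤ) - 1)
  have hcast : (((n - 1 : ℕ) : ℤ)) = (n : ℤ) - 1 := by
    have := Nat.cast_sub (R := ℤ) hn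
    simpa using this
  have harg : (((n:ℤ) - 1 : ℤ) : ℝ) + 1 = (n : ℝ) := by push_cast; ring
  rw [harg] at h
  unfold chebU
  rw [hcast]
  have hsq : 1 - Real.cos t ^ 2 = Real.sin t ^ 2 := by
    have := Real.sin_sq_add_cos_sq t; linarith
  rw [hsq]
  linear_combination Real.sin t * h

lemma g_eval (j κ : ℕ) (hj : 1 ≤ j) (hκ : 1 ≤ κ) {E a b : ℝ} (ha : Real.cos a ≠ 0)
    (hE : Real.cos a * Real.cos b = E) :
    g j κ E (Real.cos a) =
      Real.cos b * Real.sin a * Real.sin (((j*κ : ℕ) : ℝ) * a)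
      + Real.cos a * Real.sin b * Real.sin (((j*κ : ℕ) : ℝ) * b) := by
  have hjk : 1 ≤ j * κ := Nat.one_le_iff_ne_zero.2 (by positivity)
  have hdiv : E / Real.cos a = Real.cos b := by
    rw [← hE]; exact mul_div_cancel_left₀ _ ha
  unfold g
  rw [hdiv]
  have h1 := cheb_eval (j*κ) hjk a
  have h2 := cheb_eval (j*κ) hjk b
  linear_combination Real.cos b * h1 + Real.cos a * h2

lemma g_one (j κ : ℕ) (hj : 1 ≤ j) (hκ : 1 ≤ κ) {E b : ℝ} (hE : Real.cos b = E) :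
    g j κ E 1 = Real.sin b * Real.sin (((j*κ : ℕ) : ℝ) * b) := by
  have hjk : 1 ≤ j * κ := Nat.one_le_iff_ne_zero.2 (by positivity)
  have h2 := cheb_eval (j*κ) hjk b
  unfold g
  rw [div_one, ← hE]
  linear_combination h2

/-- frequency flip: `sin(jκ(2s - x)) = -sin(jκ x)` when `κ s = π`. -/
lemma sin_flip {κ : ℕ} {s : ℝ} (hks : (κ:ℝ) * s = π) (j : ℕ) (x : ℝ) :
    Real.sin (((j*κ : ℕ) : ℝ) * (2*s - x)) = - Real.sin (((j*κ : ℕ) : ℝ) * x) := by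
  have harg : ((j*κ : ℕ) : ℝ) * (2*s - x) = ((2*j : ℕ) : ℝ) * π - ((j*κ : ℕ) : ℝ) * x := by
    push_cast
    linear_combination (2*(j:ℝ)) * hks
  have hA : (((2*j : ℕ)) : ℝ) * π = ((j : ℕ) : ℝ) * (2*π) := by push_cast; ring
  have hsinA : Real.sin (((2*j : ℕ) : ℝ) * π) = 0 := Real.sin_nat_mul_pi (2*j)
  have hcosA : Real.cos (((2*j : ℕ) : ℝ) * π) = 1 := by
    rw [hA]; exact Real.cos_nat_mul_two_pi j
  rw [harg, Real.sin_sub, hsinA, hcosA]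
  ring

lemma sin_jk_s {κ : ℕ} {s : ℝ} (hks : (κ:ℝ) * s = π) (j : ℕ) :
    Real.sin (((j*κ : ℕ) : ℝ) * s) = 0 := by
  have harg : ((j*κ : ℕ) : ℝ) * s = ((j : ℕ) : ℝ) * π := by
    push_cast; linear_combination (j:ℝ) * hks
  rw [harg]; exact Real.sin_nat_mul_pi j

/-- The key membership lemma: a closed chain of length `k+1` puts `E` in `Θ_{k+1,κ}`. -/
lemma theta2_mem (κ : ℕ) (hκ1 : 1 ≤ κ) {s : ℝ} (hks : (κ:ℝ) * s = π)
    (hs : 0 < s) (h2s : 2*s ≤ π/2)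
    (k : ℕ) {E : ℝ} (hE0 : 0 < E) (hE1 : E < 1)
    (b : ℕ → ℝ)
    (hb : ∀ i ≤ k, 0 < b i ∧ b i < s)
    (hrec : ∀ i < k, Real.cos (2*s - b i) * Real.cos (b (i+1)) = E)
    (hclose : Real.cos (2*s - b k) = E)
    (x₀ B₀ : ℝ) (hx₀ : x₀ ≠ 0) (hx₀1 : |x₀| ≤ 1) (hx₀E : |E / x₀| ≤ 1) (hB₀ : 0 < B₀)
    (hg₀ : ∀ j : ℕ, 1 ≤ j → g j κ E x₀ = B₀ * Real.sin (((j*κ : ℕ) : ℝ) * b 0)) :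
    Theta2 (k+1) κ E := by
  have hsπ : s < π := by linarith [Real.pi_pos]
  -- positivity of the various coefficients
  have hsin2s : ∀ i ≤ k, 0 < Real.sin (2*s - b i) := by
    intro i hi
    apply Real.sin_pos_of_pos_of_lt_pi
    · linarith [(hb i hi).2]
    · linarith [(hb i hi).1, Real.pi_pos]
  have hcos2s : ∀ i ≤ k, 0 < Real.cos (2*s - b i) := by
    intro i hi
    apply Real.cos_pos_of_mem_Ioo
    constructor
    · linarith [(hb i hi).2, Real.pi_pos]
    · linarith [(hb i hi).1]
  have hcosb : ∀ i ≤ k, 0 < Real.cos (b i) := by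
    intro i hi
    apply Real.cos_pos_of_mem_Ioo
    constructor
    · linarith [(hb i hi).1, Real.pi_pos]
    · linarith [(hb i hi).2]
  have hsinb : ∀ i ≤ k, 0 < Real.sin (b i) := by
    intro i hi
    exact Real.sin_pos_of_pos_of_lt_pi (hb i hi).1 (by linarith [(hb i hi).2])
  -- the coefficient sequences
  set A : ℕ → ℝ := fun i => Real.cos (b (i+1)) * Real.sin (2*s - b i) with hA
  set Bc : ℕ → ℝ := fun i => if i = 0 then B₀ else Real.cos (2*s - b (i-1)) * Real.sin (b i)
    with hBc
  set ρ : ℕ → ℝ := fun i => Nat.rec (motive := fun _ => ℝ) 1 (fun i r => r * Bc i / A i) i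
    with hρ
  have hAdef : ∀ i, A i = Real.cos (b (i+1)) * Real.sin (2*s - b i) := fun i => rfl
  have hBc0 : Bc 0 = B₀ := by simp [hBc]
  have hBcs : ∀ i, Bc (i+1) = Real.cos (2*s - b i) * Real.sin (b (i+1)) := by
    intro i; simp [hBc]
  have hρ0 : ρ 0 = 1 := rfl
  have hρsucc : ∀ i, ρ (i+1) = ρ i * Bc i / A i := fun i => rfl
  clear_value A Bc ρ
  have hApos : ∀ i < k, 0 < A i := by
    intro i hi
    rw [hAdef]
    exact mul_pos (hcosb (i+1) hi) (hsin2s i (le_of_lt hi))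
  have hBcpos : ∀ i ≤ k, 0 < Bc i := by
    intro i hi
    rcases Nat.eq_zero_or_pos i with h | h
    · subst h; rw [hBc0]; exact hB₀
    · obtain ⟨l, rfl⟩ : ∃ l, i = l + 1 := ⟨i - 1, by omega⟩
      rw [hBcs]
      exact mul_pos (hcos2s l (by omega)) (hsinb (l+1) hi)
  have hρpos : ∀ i ≤ k, 0 < ρ i := by
    intro i hi
    induction i with
    | zero => rw [hρ0]; norm_num
    | succ n ih =>
      rw [hρsucc]
      have h1 := ih (by omega)
      have h2 := hBcpos n (by omega)
      have h3 := hApos n (by omega)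
      positivity
  set t : ℝ := Real.sin (2*s - b k) / (ρ k * Bc k) with ht
  have htpos : 0 < t := by
    rw [ht]
    apply div_pos (hsin2s k le_rfl)
    exact mul_pos (hρpos k le_rfl) (hBcpos k le_rfl)
  have htcancel : t * (ρ k * Bc k) = Real.sin (2*s - b k) := by
    rw [ht]
    exact div_mul_cancel₀ _ (ne_of_gt (mul_pos (hρpos k le_rfl) (hBcpos k le_rfl)))
  clear_value t
  set ω : ℕ → ℝ := fun q => -(t * ρ q) with hω
  have hωdef : ∀ q, ω q = -(t * ρ q) := fun q => rfl
  clear_value ω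
  have hslot : ∀ i < k, ω i * Bc i = ω (i+1) * A i := by
    intro i hi
    have hAne : A i ≠ 0 := ne_of_gt (hApos i hi)
    have h1 : ρ (i+1) * A i = ρ i * Bc i := by
      rw [hρsucc]; exact div_mul_cancel₀ _ hAne
    rw [hωdef, hωdef]
    linear_combination t * h1
  -- the points
  set x : ℕ → ℝ := fun q => if q = 0 then x₀ else
    if q ≤ k then Real.cos (2*s - b (q-1)) else 1 with hx
  have hx0 : x 0 = x₀ := by simp [hx]
  have hxmid : ∀ q, q ≠ 0 → q ≤ k → x q = Real.cos (2*s - b (q-1)) := by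
    intro q h1 h2; simp [hx, h1, h2]
  have hxtop : ∀ q, q ≠ 0 → ¬ (q ≤ k) → x q = 1 := by
    intro q h1 h2; simp [hx, h1, h2]
  clear_value x
  refine ⟨x, ω, ?_, ?_, ?_⟩
  · -- point constraints
    intro q hq
    rcases Nat.eq_zero_or_pos q with h | hqpos
    · subst h
      rw [hx0]
      exact ⟨hx₀, hx₀1, hx₀E⟩
    · have hq0 : q ≠ 0 := Nat.pos_iff_ne_zero.1 hqpos
      by_cases hqk : q ≤ k
      · rw [hxmid q hq0 hqk]
        have hi : q - 1 < k := by omega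
        have hcpos := hcos2s (q-1) (by omega)
        refine ⟨ne_of_gt hcpos, Real.abs_cos_le_one _, ?_⟩
        have hrec' := hrec (q-1) hi
        have hq1 : q - 1 + 1 = q := by omega
        rw [hq1] at hrec'
        have : E / Real.cos (2*s - b (q-1)) = Real.cos (b q) := by
          rw [← hrec']; exact mul_div_cancel_left₀ _ (ne_of_gt hcpos)
        rw [this]
        exact Real.abs_cos_le_one _
      · rw [hxtop q hq0 hqk]
        refine ⟨one_ne_zero, by norm_num, ?_⟩
        rw [div_one, abs_of_pos hE0]
        linarith
  · -- signs of ω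
    intro q hq
    have h1 : 0 < ρ q := hρpos q (by omega)
    rw [hωdef]
    nlinarith
  · -- the linear relation
    intro j hj
    set S : ℕ → ℝ := fun i => Real.sin (((j*κ : ℕ) : ℝ) * b i) with hS
    have hSdef : ∀ i, S i = Real.sin (((j*κ : ℕ) : ℝ) * b i) := fun i => rfl
    clear_value S
    set T : ℕ → ℝ := fun i => ω i * (Bc i * S i) with hT
    have hTdef : ∀ i, T i = ω i * (Bc i * S i) := fun i => rfl
    clear_value T
    -- LHS
    have hxm : x (k+1) = 1 := hxtop (k+1) (Nat.succ_ne_zero k) (by omega)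
    have hLHS : g j κ E (x (k+1)) = - (Real.sin (2*s - b k) * S k) := by
      rw [hxm, g_one j κ hj hκ1 hclose, sin_flip hks j (b k), hSdef]
      ring
    -- the summands
    have hf0 : ω 0 * g j κ E (x 0) = T 0 := by
      rw [hx0, hg₀ j hj, hTdef, hBc0, hSdef]
    have hfs : ∀ i < k, ω (i+1) * g j κ E (x (i+1)) = T (i+1) - T i := by
      intro i hi
      have hxi : x (i+1) = Real.cos (2*s - b i) := by
        have h := hxmid (i+1) (Nat.succ_ne_zero i) hi
        rwa [Nat.add_sub_cancel] at h
      have hgi : g j κ E (Real.cos (2*s - b i)) =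
          Real.cos (b (i+1)) * Real.sin (2*s - b i) *
            Real.sin (((j*κ : ℕ) : ℝ) * (2*s - b i))
          + Real.cos (2*s - b i) * Real.sin (b (i+1)) *
            Real.sin (((j*κ : ℕ) : ℝ) * b (i+1)) :=
        g_eval j κ hj hκ1 (ne_of_gt (hcos2s i (le_of_lt hi))) (hrec i hi)
      rw [hxi, hgi, sin_flip hks j (b i)]
      have hslot'' : ω i * Bc i = ω (i+1) * (Real.cos (b (i+1)) * Real.sin (2*s - b i)) := by
        have h := hslot i hi
        rwa [hAdef] at h
      rw [hTdef, hTdef, hBcs, hSdef, hSdef]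
      linear_combination (Real.sin (((j*κ : ℕ) : ℝ) * b i)) * hslot''
    -- sum up
    have hsum : ∑ q ∈ Finset.range (k+1), ω q * g j κ E (x q) = T k := by
      rw [Finset.sum_range_succ']
      have h1 : ∀ i ∈ Finset.range k, ω (i+1) * g j κ E (x (i+1)) = T (i+1) - T i :=
        fun i hi => hfs i (Finset.mem_range.1 hi)
      rw [Finset.sum_congr rfl h1, Finset.sum_range_sub, hf0]
      ring
    rw [hLHS, hsum, hTdef, hωdef]
    linear_combination (S k) * htcancel

end ThrAux

open ThrAux

/-- There is a strictly decreasing sequence of thresholds in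
`(cos²(π/κ), cos(π/κ))` converging to `cos²(π/κ)`, with `E_{2n-1}, E_{2n} ∈ 𝚯_{n,κ}`. -/
theorem decreasing_sequence_of_thresholds (κ : ℕ) (hκ : 4 ≤ κ) (hke : Even κ) :
    ∃ E : ℕ → ℝ,
      (∀ m n : ℕ, 1 ≤ m → m < n → E n < E m) ∧
      (∀ n : ℕ, 1 ≤ n → Real.cos (π / κ) ^ 2 < E n ∧ E n < Real.cos (π / κ)) ∧
      Tendsto E atTop (nhds (Real.cos (π / κ) ^ 2)) ∧
      (∀ n : ℕ, 1 ≤ n → Theta2 n κ (E (2 * n - 1)) ∧ Theta2 n κ (E (2 * n))) := by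
  have hπ := Real.pi_pos
  have hκ4 : (4:ℝ) ≤ (κ:ℝ) := by exact_mod_cast hκ
  have hκ0 : (0:ℝ) < (κ:ℝ) := by linarith
  set s : ℝ := π / (κ:ℝ) with hsdef
  have hs : 0 < s := div_pos hπ hκ0
  have hks : (κ:ℝ) * s = π := by rw [hsdef]; field_simp
  have h2s : 2*s ≤ π/2 := by
    rw [hsdef, show 2*(π/(κ:ℝ)) = (2*π)/(κ:ℝ) by ring,
      div_le_div_iff₀ hκ0 (by norm_num : (0:ℝ) < 2)]
    nlinarith
  have hsπ : s < π := by linarith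
  have hc := c_pos hs h2s
  have hc1 : Real.cos s < 1 := c_lt_one hs (le_of_lt hsπ)
  have hcsq : Real.cos s ^ 2 < Real.cos s := by nlinarith
  have hc20 : (0:ℝ) < Real.cos s ^ 2 := by positivity
  set Ef : ℕ → ℝ := fun n => if n = 0 then Real.cos s else
    if n % 2 = 1 then et hs h2s ((n-1)/2) else th hs h2s (n/2 - 1) with hEf
  have hzero : Ef 0 = Real.cos s := by simp [hEf]
  have hodd : ∀ m : ℕ, Ef (2*m+1) = et hs h2s m := by
    intro m
    simp only [hEf]
    rw [if_neg (by omega : ¬(2*m+1 = 0)), if_pos (by omega : (2*m+1) % 2 = 1),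
      (by omega : (2*m+1-1)/2 = m)]
  have heven : ∀ m : ℕ, Ef (2*m+2) = th hs h2s m := by
    intro m
    simp only [hEf]
    rw [if_neg (by omega : ¬(2*m+2 = 0)), if_neg (by omega : ¬((2*m+2) % 2 = 1)),
      (by omega : (2*m+2)/2 - 1 = m)]
  have hadj : ∀ n : ℕ, Ef (n+1) < Ef n := by
    intro n
    rcases Nat.even_or_odd' n with ⟨m, hm | hm⟩
    · rcases Nat.eq_zero_or_pos m with h0 | hpos
      · subst h0
        rw [hm]
        have h1 : Ef (0+1) = et hs h2s 0 := by
          have := hodd 0; simpa using this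
        rw [h1, hzero]
        exact et_lt_c hs h2s 0
      · obtain ⟨l, rfl⟩ : ∃ l, m = l + 1 := ⟨m - 1, by omega⟩
        rw [hm]
        have h1 : 2*(l+1) = 2*l+2 := by ring
        have h2 : 2*(l+1)+1 = 2*(l+1)+1 := rfl
        rw [h1, heven l]
        have h3 : 2*l+2+1 = 2*(l+1)+1 := by ring
        rw [h3, hodd (l+1)]
        exact et_lt_th hs h2s l
    · rw [hm, hodd m]
      have h1 : 2*m+1+1 = 2*m+2 := by ring
      rw [h1, heven m]
      exact th_lt_et hs h2s m
  have hSA : StrictAnti Ef := strictAnti_nat_of_succ_lt hadj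
  have hbounds : ∀ n : ℕ, 1 ≤ n → Real.cos s ^ 2 < Ef n ∧ Ef n < Real.cos s := by
    intro n hn
    rcases Nat.even_or_odd' n with ⟨m, hm | hm⟩
    · obtain ⟨l, rfl⟩ : ∃ l, m = l + 1 := ⟨m - 1, by omega⟩
      rw [hm, show 2*(l+1) = 2*l+2 by ring, heven l]
      exact ⟨th_gt hs h2s l, th_lt_c hs h2s l⟩
    · rw [hm, hodd m]
      constructor
      · exact lt_trans (th_gt hs h2s m) (th_lt_et hs h2s m)
      · exact et_lt_c hs h2s m
  refine ⟨Ef, ?_, ?_, ?_, ?_⟩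
  · exact fun m n _ h => hSA h
  · exact hbounds
  · -- convergence
    have hanti : Antitone Ef := hSA.antitone
    have hbdd : BddBelow (Set.range Ef) := by
      refine ⟨Real.cos s ^ 2, ?_⟩
      rintro y ⟨n, rfl⟩
      rcases Nat.eq_zero_or_pos n with h0 | hpos
      · subst h0; rw [hzero]; linarith
      · exact le_of_lt (hbounds n hpos).1
    have hT := tendsto_atTop_ciInf hanti hbdd
    have hmono : Tendsto (fun m : ℕ => 2*(m+1)) atTop atTop := by
      apply tendsto_atTop_atTop.2
      intro b
      exact ⟨b, fun m hm => by omega⟩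
    have hcomp : Tendsto (fun m => Ef (2*(m+1))) atTop (nhds (⨅ n, Ef n)) := hT.comp hmono
    have heq : (fun m => Ef (2*(m+1))) = (fun m => th hs h2s m) := by
      funext m
      rw [show 2*(m+1) = 2*m+2 by ring, heven m]
    rw [heq] at hcomp
    have huniq : (⨅ n, Ef n) = Real.cos s ^ 2 :=
      tendsto_nhds_unique hcomp (th_tendsto hs h2s)
    rwa [huniq] at hT
  · -- membership
    intro n hn
    obtain ⟨k, rfl⟩ : ∃ k, n = k + 1 := ⟨n - 1, by omega⟩
    have hidx1 : 2*(k+1) - 1 = 2*k+1 := by omega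
    have hidx2 : 2*(k+1) = 2*k+2 := by ring
    rw [hidx1, hodd k, hidx2, heven k]
    have hκ1 : 1 ≤ κ := by omega
    constructor
    · -- η_k = et k ∈ Θ_{k+1}
      set E : ℝ := et hs h2s k with hEdef
      have hEgt : Real.cos s ^ 2 < E := lt_trans (th_gt hs h2s k) (th_lt_et hs h2s k)
      have hElt : E < Real.cos s := et_lt_c hs h2s k
      have hE0 : 0 < E := by linarith
      have hE1 : E < 1 := by linarith
      have hok0 := b0D_ok hs h2s hEgt hElt
      have hval := et_valid hs h2s k
      have hb : ∀ i ≤ k, 0 < chD s E i ∧ chD s E i < s :=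
        fun i hi => chain_ok hs h2s hEgt hok0.1 hok0.2 k hval i hi
      have hrec : ∀ i < k, Real.cos (2*s - chD s E i) * Real.cos (chD s E (i+1)) = E := by
        intro i hi
        have h : Real.cos (chD s E (i+1)) = E / Real.cos (2*s - chD s E i) :=
          chain_cos hs h2s hEgt hok0.1 hok0.2 k hval i hi
        have hd : Real.cos (2*s - chD s E i) ≠ 0 :=
          ne_of_gt (lt_trans hE0 (hval i hi))
        rw [h]
        field_simp
      have hsq1 : Real.sqrt E < 1 := by
        have h := Real.sqrt_lt_sqrt (le_of_lt hE0) hE1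
        simpa using h
      have hsq0 : 0 < Real.sqrt E := Real.sqrt_pos.2 hE0
      have hcosb0 : Real.cos (chD s E 0) = Real.sqrt E := by
        show Real.cos (Real.arccos (Real.sqrt E)) = Real.sqrt E
        exact Real.cos_arccos (by linarith [Real.sqrt_nonneg E]) (le_of_lt hsq1)
      have hcb0pos : 0 < Real.cos (chD s E 0) := by rw [hcosb0]; exact hsq0
      have hsb0pos : 0 < Real.sin (chD s E 0) :=
        Real.sin_pos_of_pos_of_lt_pi (hb 0 (by omega)).1
          (by linarith [(hb 0 (by omega)).2])
      apply theta2_mem κ hκ1 hks hs h2s k hE0 hE1 (chD s E) hb hrec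
        (et_closing hs h2s k) (Real.sqrt E)
        (2 * (Real.cos (chD s E 0) * Real.sin (chD s E 0)))
        (ne_of_gt hsq0)
        (by rw [abs_of_pos hsq0]; linarith)
        (by rw [Real.div_sqrt, abs_of_pos hsq0]; linarith)
        (by positivity)
      intro j hj
      have hprod : Real.cos (chD s E 0) * Real.cos (chD s E 0) = E := by
        rw [hcosb0]; exact Real.mul_self_sqrt (le_of_lt hE0)
      rw [show Real.sqrt E = Real.cos (chD s E 0) from hcosb0.symm]
      rw [g_eval j κ hj hκ1 (ne_of_gt hcb0pos) hprod]
      ring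
    · -- θ_k = th k ∈ Θ_{k+1}
      set E : ℝ := th hs h2s k with hEdef
      have hEgt : Real.cos s ^ 2 < E := th_gt hs h2s k
      have hElt : E < Real.cos s := th_lt_c hs h2s k
      have hE0 : 0 < E := by linarith
      have hE1 : E < 1 := by linarith
      have hok0 := b0B_ok hs h2s hEgt hElt
      have hval := th_valid hs h2s k
      have hb : ∀ i ≤ k, 0 < chB s E i ∧ chB s E i < s :=
        fun i hi => chain_ok hs h2s hEgt hok0.1 hok0.2 k hval i hi
      have hrec : ∀ i < k, Real.cos (2*s - chB s E i) * Real.cos (chB s E (i+1)) = E := by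
        intro i hi
        have h : Real.cos (chB s E (i+1)) = E / Real.cos (2*s - chB s E i) :=
          chain_cos hs h2s hEgt hok0.1 hok0.2 k hval i hi
        have hd : Real.cos (2*s - chB s E i) ≠ 0 :=
          ne_of_gt (lt_trans hE0 (hval i hi))
        rw [h]
        field_simp
      have hq0 : 0 < E / Real.cos s := div_pos hE0 hc
      have hq1 : E / Real.cos s < 1 := (div_lt_one hc).2 hElt
      have hcosb0 : Real.cos (chB s E 0) = E / Real.cos s := by
        show Real.cos (Real.arccos (E / Real.cos s)) = E / Real.cos s
        exact Real.cos_arccos (by linarith) (le_of_lt hq1)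
      have hsb0pos : 0 < Real.sin (chB s E 0) :=
        Real.sin_pos_of_pos_of_lt_pi (hb 0 (by omega)).1
          (by linarith [(hb 0 (by omega)).2])
      apply theta2_mem κ hκ1 hks hs h2s k hE0 hE1 (chB s E) hb hrec
        (th_closing hs h2s k) (Real.cos s)
        (Real.cos s * Real.sin (chB s E 0))
        (ne_of_gt hc)
        (Real.abs_cos_le_one s)
        (by rw [abs_of_pos hq0]; linarith)
        (by positivity)
      intro j hj
      have hprod : Real.cos s * Real.cos (chB s E 0) = E := by
        rw [hcosb0]; field_simp
      rw [g_eval j κ hj hκ1 (ne_of_gt hc) hprod]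
      rw [sin_jk_s hks j]
      ring
end

section
/- Fix an even integer κ ≥ 6. There exists a strictly increasing sequence (F_n)_{n≥1} of real numbers such that: (i) cos(π/κ)·cos(2π/κ) < F_n < cos(2π/κ) for every n ≥ 1; (ii) F_n → cos(2π/κ) as n → ∞; and (iii) for every n ≥ 1, both F_{2n−1} and F_{2n} belong to 𝚯_{n,κ} (dimension 2). -/
open Real Filter

/-!
Write `c = 2π/κ`. For an energy `E` the chain `u₀ = arccos (E / cos c)`,
`u_{q+1} = arccos (E / cos (c - u_q))` gives points `x_q = cos (c - u_q)` with `E / x_q = cos u_{q+1}`.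
Since `(1 - cos² t) U_{N-1}(cos t) = sin t sin (N t)` and `sin (jκ (c - t)) = -sin (jκ t)`,
the values `g_{jκ}^E(x_q)` are combinations of consecutive `sin (jκ u_q)`, which telescope with
nonpositive weights to `g_{jκ}^E(cos u₀)` as soon as the chain closes up: either `u_n = π/κ`,
where all `sin (jκ u_n)` vanish, or `u_n = c - u_{n-1}`.

While it stays below `c/2`, the chain of an energy `E < cos c` climbs by a definite amount, so it
eventually passes `c/2`. The infimum `σ_n` of the energies whose chain stays below `c/2` up to
step `n` has `u_n = c/2` exactly; these thresholds increase to `cos c`, starting from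
`σ_0 = cos (π/κ) cos c`. Between `σ_{n-1}` and `σ_n` the intermediate value theorem gives an energy
with `cos² (c - u_{n-1}) = E`, i.e. `u_n = c - u_{n-1}`. Interleaving both families gives `F`.
-/

open Set Topology

theorem exists_crossing_of_upClosed_sublevel {f : ℝ → ℝ} {a b t : ℝ} (hab : a < b)
    (hf : ContinuousOn f (Icc a b)) (ha : t < f a) (hb : f b < t)
    (hup : ∀ x ∈ Ioo a b, ∀ y ∈ Ioo a b, x ≤ y → f x < t → f y < t) :
    ∃ s ∈ Ioo a b, f s = t ∧ ∀ x ∈ Ioo a b, f x < t ↔ s < x := by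
  set S := {x | x ∈ Ioo a b ∧ f x < t}
  have hne : S.Nonempty := by
    have hlt : ∀ᶠ x in 𝓝[Ioo a b] b, f x < t :=
      ((hf b (right_mem_Icc.2 hab.le)).mono Ioo_subset_Icc_self) (gt_mem_nhds hb)
    rw [nhdsWithin_Ioo_eq_nhdsLT hab] at hlt
    exact (hlt.and (Ioo_mem_nhdsLT hab)).exists.imp fun x hx => ⟨hx.2, hx.1⟩
  have hbdd : BddBelow S := ⟨a, fun x hx => hx.1.1.le⟩
  set s := sInf S
  have hs : s ∈ Icc a b ∧ f s ≤ t := by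
    have hK : IsClosed (Icc a b ∩ f ⁻¹' Iic t) :=
      hf.preimage_isClosed_of_isClosed isClosed_Icc isClosed_Iic
    exact hK.closure_subset_iff.2 (fun x hx => ⟨Ioo_subset_Icc_self hx.1, hx.2.le⟩)
      (csInf_mem_closure hne hbdd)
  have has : a < s := hs.1.1.lt_of_ne fun h => by linarith [h ▸ hs.2]
  have hsb : s < b := hne.elim fun x hx => (csInf_le hbdd hx).trans_lt hx.1.2
  have hfs : f s = t := by
    refine le_antisymm hs.2 (not_lt.1 fun hlt => ?_)
    have hnear : ∀ᶠ x in 𝓝[<] s, f x < t :=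
      (hf.continuousAt (Icc_mem_nhds has hsb)).continuousWithinAt (gt_mem_nhds hlt)
    obtain ⟨x, hfx, hx⟩ := (hnear.and (Ioo_mem_nhdsLT has)).exists
    exact (csInf_le hbdd ⟨⟨hx.1, hx.2.trans hsb⟩, hfx⟩).not_gt hx.2
  refine ⟨s, ⟨has, hsb⟩, hfs, fun x hx => ⟨fun hfx => ?_, fun hsx => ?_⟩⟩
  · exact (csInf_le hbdd ⟨hx, hfx⟩).lt_of_ne (by rintro rfl; exact hfx.ne hfs)
  · obtain ⟨y, hy, hyx⟩ := exists_lt_of_csInf_lt hne hsx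
    exact hup y hy.1 x hx hyx.le hy.2

theorem exists_strictMono_interleave {σ ε : ℕ → ℝ} (h : ∀ m, ε m ∈ Ioo (σ m) (σ (m + 1))) :
    ∃ F : ℕ → ℝ, StrictMono F ∧ (∀ m, F (2 * m) = σ m ∧ F (2 * m + 1) = ε m) ∧
      ∀ k, F k ∈ Ico (σ (k / 2)) (σ (k / 2 + 1)) := by
  set F : ℕ → ℝ := fun k => if Even k then σ (k / 2) else ε (k / 2)
  have hF_even (m : ℕ) : F (2 * m) = σ m := by simp [F]
  have hF_odd (m : ℕ) : F (2 * m + 1) = ε m := by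
    simp only [F, if_neg (Nat.not_even_two_mul_add_one m), show (2 * m + 1) / 2 = m by omega]
  have hF_mem (k : ℕ) : F k ∈ Ico (σ (k / 2)) (σ (k / 2 + 1)) := by
    obtain ⟨m, rfl | rfl⟩ := Nat.even_or_odd' k
    · rw [hF_even, Nat.mul_div_cancel_left m two_pos]
      exact ⟨le_rfl, (h m).1.trans (h m).2⟩
    · rw [hF_odd, show (2 * m + 1) / 2 = m by omega]
      exact ⟨(h m).1.le, (h m).2⟩
  refine ⟨F, strictMono_nat_of_lt_succ fun k => ?_, fun m => ⟨hF_even m, hF_odd m⟩, hF_mem⟩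
  obtain ⟨m, rfl | rfl⟩ := Nat.even_or_odd' k
  · rw [hF_even, hF_odd]
    exact (h m).1
  · rw [hF_odd, show 2 * m + 1 + 1 = 2 * (m + 1) by ring, hF_even]
    exact (h m).2

theorem exists_nonpos_weights_telescoping (m : ℕ) {S T : ℕ → ℝ} {c₀ lam : ℝ}
    (hS : ∀ q ≤ m, 0 < S q) (hT : ∀ q ≤ m, 0 ≤ T q) (hc₀ : 0 ≤ c₀) (hlam : 0 ≤ lam) :
    ∃ ω : ℕ → ℝ, (∀ q < m + 1, ω q ≤ 0) ∧ ∀ s : ℕ → ℝ, s (m + 1) = -lam * s m →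
      ∑ q ∈ Finset.range (m + 1), ω q * (T q * s (q + 1) - S q * s q) = c₀ * s 0 := by
  -- `μ q = -ω q * S q`; its recursion `μ (q + 1) = μ q * T q / S q` makes the sum telescope
  set μ : ℕ → ℝ := fun q => c₀ * ∏ r ∈ Finset.range q, T r / S r with hμ_def
  have hμ : ∀ q ≤ m, 0 ≤ μ q := fun q hq => mul_nonneg hc₀ <| Finset.prod_nonneg fun r hr =>
    div_nonneg (hT r (by grind)) (hS r (by grind)).le
  have hμ_succ : ∀ q, μ (q + 1) = μ q * (T q / S q) := fun q => by
    simp only [hμ_def, Finset.prod_range_succ]; ring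
  have hST : 0 < S m + lam * T m := add_pos_of_pos_of_nonneg (hS m le_rfl) (by
    have := hT m le_rfl; positivity)
  set ω : ℕ → ℝ := fun q => if q < m then -(μ q / S q) else -(μ m / (S m + lam * T m))
  refine ⟨ω, fun q hq => ?_, fun s hs => ?_⟩
  · simp only [ω]
    split_ifs with h
    · exact neg_nonpos.2 (div_nonneg (hμ q h.le) (hS q h.le).le)
    · exact neg_nonpos.2 (div_nonneg (hμ m le_rfl) hST.le)
  have hterm : ∀ q ∈ Finset.range m,
      ω q * (T q * s (q + 1) - S q * s q) = μ q * s q - μ (q + 1) * s (q + 1) := by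
    intro q hq
    have hq := Finset.mem_range.1 hq
    simp only [ω, if_pos hq, hμ_succ]
    field_simp [(hS q hq.le).ne']
    ring
  rw [Finset.sum_range_succ, Finset.sum_congr rfl hterm, Finset.sum_range_sub', hs]
  simp only [ω, hμ_def, lt_irrefl, if_false, Finset.range_zero, Finset.prod_empty]
  field_simp
  ring

theorem one_sub_cos_sq_mul_chebU (m : ℕ) (t : ℝ) :
    (1 - cos t ^ 2) * chebU m (cos t) = sin t * sin ((m + 1 : ℕ) * t) := by
  have h := Polynomial.Chebyshev.U_real_cos t m
  push_cast at h ⊢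
  rw [chebU, ← sin_sq, ← h]
  ring

theorem g_cos_of_cos_mul_cos {j κ : ℕ} (hjκ : j * κ ≠ 0) {a b E : ℝ} (ha : cos a ≠ 0)
    (hab : cos a * cos b = E) :
    g j κ E (cos a) =
      cos b * sin a * sin ((j * κ : ℕ) * a) + cos a * sin b * sin ((j * κ : ℕ) * b) := by
  have hb : E / cos a = cos b := by rw [← hab]; field_simp
  have hN : j * κ - 1 + 1 = j * κ := Nat.sub_add_cancel (Nat.one_le_iff_ne_zero.2 hjκ)
  rw [g, hb, mul_assoc (cos b), one_sub_cos_sq_mul_chebU, mul_assoc (cos a),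
    one_sub_cos_sq_mul_chebU, hN]
  ring

theorem sin_natCast_mul_two_pi_div_sub {κ : ℕ} (hκ : κ ≠ 0) (j : ℕ) (t : ℝ) :
    sin ((j * κ : ℕ) * (2 * π / κ - t)) = -sin ((j * κ : ℕ) * t) := by
  rw [← sin_nat_mul_two_pi_sub _ j]
  congr 1
  push_cast
  field_simp

theorem theta2_of_cos_mul_cos_chain {κ m : ℕ} (hκ : 2 < κ) {E lam : ℝ} {u : ℕ → ℝ}
    (hE : 0 < E) (hlam : 0 ≤ lam) (hu : ∀ q ≤ m + 1, u q ∈ Ico 0 (π / 2))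
    (hlt : ∀ q ≤ m, u q < 2 * π / κ) (h₀ : cos (2 * π / κ) * cos (u 0) = E)
    (hstep : ∀ q ≤ m, cos (2 * π / κ - u q) * cos (u (q + 1)) = E)
    (hend : ∀ j : ℕ, 1 ≤ j →
      sin ((j * κ : ℕ) * u (m + 1)) = -lam * sin ((j * κ : ℕ) * u m)) :
    Theta2 (m + 1) κ E := by
  set c := 2 * π / κ with hc
  have hκ₀ : κ ≠ 0 := by omega
  have hcπ : c < π := by
    rw [hc, div_lt_iff₀ (by positivity)]
    nlinarith [mul_lt_mul_of_pos_left (by exact_mod_cast hκ : (2 : ℝ) < κ) pi_pos]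
  have hcos_u : ∀ q ≤ m + 1, 0 < cos (u q) := fun q hq =>
    cos_pos_of_mem_Ioo ⟨by linarith [(hu q hq).1, pi_pos], (hu q hq).2⟩
  have hsin_u : ∀ q ≤ m + 1, 0 ≤ sin (u q) := fun q hq =>
    sin_nonneg_of_nonneg_of_le_pi (hu q hq).1 (by linarith [(hu q hq).2, pi_pos])
  have hcos_sub : ∀ q ≤ m, 0 < cos (c - u q) := fun q hq =>
    pos_of_mul_pos_left (hstep q hq ▸ hE) (hcos_u (q + 1) (by omega)).le
  have hcos_c : 0 < cos c := pos_of_mul_pos_left (h₀ ▸ hE) (hcos_u 0 (by omega)).le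
  have hsin_sub : ∀ q ≤ m, 0 < sin (c - u q) := fun q hq =>
    sin_pos_of_pos_of_lt_pi (by linarith [hlt q hq]) (by linarith [(hu q (by omega)).1])
  obtain ⟨ω, hω, hsum⟩ := exists_nonpos_weights_telescoping m
    (S := fun q => cos (u (q + 1)) * sin (c - u q)) (T := fun q => cos (c - u q) * sin (u (q + 1)))
    (c₀ := cos c * sin (u 0)) (lam := lam)
    (fun q hq => mul_pos (hcos_u (q + 1) (by omega)) (hsin_sub q hq))
    (fun q hq => mul_nonneg (hcos_sub q hq).le (hsin_u (q + 1) (by omega)))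
    (mul_nonneg hcos_c.le (hsin_u 0 (by omega))) hlam
  have hdiv : ∀ q ≤ m, E / cos (c - u q) = cos (u (q + 1)) := fun q hq => by
    rw [← hstep q hq]; field_simp [(hcos_sub q hq).ne']
  refine ⟨fun q => if q ≤ m then cos (c - u q) else cos (u 0), ω, fun q hq => ?_, hω,
    fun j hj => ?_⟩
  · by_cases hqm : q ≤ m
    · simp only [if_pos hqm, hdiv q hqm]
      exact ⟨(hcos_sub q hqm).ne', abs_cos_le_one _, abs_cos_le_one _⟩
    · have h₀' : E / cos (u 0) = cos c := by rw [← h₀]; field_simp [(hcos_u 0 (by omega)).ne']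
      simp only [if_neg hqm, h₀']
      exact ⟨(hcos_u 0 (by omega)).ne', abs_cos_le_one _, abs_cos_le_one _⟩
  have hjκ : j * κ ≠ 0 := by positivity
  have hsin_c : sin ((j * κ : ℕ) * c) = 0 := by
    simpa using sin_natCast_mul_two_pi_div_sub hκ₀ j 0
  have hsum_j := hsum (fun q => sin ((j * κ : ℕ) * u q)) (hend j hj)
  beta_reduce at hsum_j
  simp only [if_neg (Nat.not_succ_le_self m)]
  rw [g_cos_of_cos_mul_cos hjκ (hcos_u 0 (by omega)).ne' (by rw [mul_comm]; exact h₀), hsin_c,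
    mul_zero, add_zero, ← hsum_j]
  refine Finset.sum_congr rfl fun q hq => ?_
  have hqm : q ≤ m := Nat.lt_succ_iff.1 (Finset.mem_range.1 hq)
  rw [if_pos hqm, g_cos_of_cos_mul_cos hjκ (hcos_sub q hqm).ne' (hstep q hqm),
    sin_natCast_mul_two_pi_div_sub hκ₀]
  ring

noncomputable def chainStep (c E u : ℝ) : ℝ := arccos (E / cos (c - u))

/-- The chain `u₀ = arccos (E / cos c)`, `u_{q+1} = arccos (E / cos (c - u_q))`, written as the
iterates of `chainStep` starting from `u₋₁ = 0`. -/
noncomputable def angleChain (c E : ℝ) (q : ℕ) : ℝ := (chainStep c E)^[q + 1] 0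

section AngleChain

variable {c E u : ℝ}

theorem cos_pos_of_mem_Ioo_zero_pi_div_two (hc : c ∈ Ioo 0 (π / 2)) : 0 < cos c :=
  cos_pos_of_mem_Ioo ⟨by linarith [hc.1, pi_pos], hc.2⟩

theorem angleChain_zero : angleChain c E 0 = chainStep c E 0 := rfl

theorem angleChain_succ (q : ℕ) :
    angleChain c E (q + 1) = chainStep c E (angleChain c E q) :=
  Function.iterate_succ_apply' _ _ _

theorem le_cos_sub (hc : c ∈ Ioo 0 (π / 2)) (hE : E ∈ Ioc 0 (cos c))
    (hu : u ∈ Icc 0 (arccos E)) : E ≤ cos (c - u) := by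
  rcases le_total u c with huc | hcu
  · calc E ≤ cos c := hE.2
      _ ≤ cos (c - u) := cos_le_cos_of_nonneg_of_le_pi (by linarith [hu.1])
          (by linarith [hc.2, pi_pos]) (by linarith [hu.1])
  · rw [← cos_neg, neg_sub]
    calc E = cos (arccos E) := (cos_arccos (by linarith [hE.1]) (hE.2.trans (cos_le_one c))).symm
      _ ≤ cos (u - c) := cos_le_cos_of_nonneg_of_le_pi (by linarith) (arccos_le_pi E)
          (by linarith [hu.2, hc.1])

theorem cos_sub_pos (hc : c ∈ Ioo 0 (π / 2)) (hE : E ∈ Ioc 0 (cos c))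
    (hu : u ∈ Icc 0 (arccos E)) : 0 < cos (c - u) :=
  hE.1.trans_le (le_cos_sub hc hE hu)

theorem cos_sub_mul_cos_chainStep (hc : c ∈ Ioo 0 (π / 2)) (hE : E ∈ Ioc 0 (cos c))
    (hu : u ∈ Icc 0 (arccos E)) : cos (c - u) * cos (chainStep c E u) = E := by
  have hd := cos_sub_pos hc hE hu
  rw [chainStep, cos_arccos (by linarith [div_pos hE.1 hd])
    ((div_le_one hd).2 (le_cos_sub hc hE hu))]
  field_simp

theorem chainStep_mem_Icc (hc : c ∈ Ioo 0 (π / 2)) (hE : E ∈ Ioc 0 (cos c))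
    (hu : u ∈ Icc 0 (arccos E)) : chainStep c E u ∈ Icc 0 (arccos E) :=
  ⟨arccos_nonneg _, arccos_le_arccos (le_div_self hE.1.le (cos_sub_pos hc hE hu) (cos_le_one _))⟩

theorem angleChain_mem_Icc (hc : c ∈ Ioo 0 (π / 2)) (hE : E ∈ Ioc 0 (cos c)) (q : ℕ) :
    angleChain c E q ∈ Icc 0 (arccos E) := by
  induction q with
  | zero => exact chainStep_mem_Icc hc hE ⟨le_rfl, arccos_nonneg E⟩
  | succ q ih => rw [angleChain_succ]; exact chainStep_mem_Icc hc hE ih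

theorem angleChain_lt_pi_div_two (hc : c ∈ Ioo 0 (π / 2)) (hE : E ∈ Ioc 0 (cos c)) (q : ℕ) :
    angleChain c E q < π / 2 :=
  (angleChain_mem_Icc hc hE q).2.trans_lt (arccos_lt_pi_div_two.2 hE.1)

theorem cos_mul_cos_angleChain_zero (hc : c ∈ Ioo 0 (π / 2)) (hE : E ∈ Ioc 0 (cos c)) :
    cos c * cos (angleChain c E 0) = E := by
  simpa [angleChain_zero] using cos_sub_mul_cos_chainStep hc hE ⟨le_rfl, arccos_nonneg E⟩

theorem cos_sub_angleChain_mul_cos (hc : c ∈ Ioo 0 (π / 2)) (hE : E ∈ Ioc 0 (cos c)) (q : ℕ) :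
    cos (c - angleChain c E q) * cos (angleChain c E (q + 1)) = E := by
  rw [angleChain_succ]
  exact cos_sub_mul_cos_chainStep hc hE (angleChain_mem_Icc hc hE q)

theorem continuousAt_angleChain (hc : c ∈ Ioo 0 (π / 2)) {E₀ : ℝ} (hE₀ : E₀ ∈ Ioc 0 (cos c))
    (q : ℕ) : ContinuousAt (fun E => angleChain c E q) E₀ := by
  have step : ∀ {f : ℝ → ℝ}, ContinuousAt f E₀ → f E₀ ∈ Icc 0 (arccos E₀) →
      ContinuousAt (fun E => chainStep c E (f E)) E₀ := fun hf hmem =>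
    (continuousAt_id.div (continuous_cos.continuousAt.comp (continuousAt_const.sub hf))
      (cos_sub_pos hc hE₀ hmem).ne').arccos
  induction q with
  | zero => exact step continuousAt_const ⟨le_rfl, arccos_nonneg E₀⟩
  | succ q ih =>
    simp only [angleChain_succ]
    exact step ih (angleChain_mem_Icc hc hE₀ q)

theorem angleChain_cos_self (hc : c ∈ Ioo 0 (π / 2)) (q : ℕ) : angleChain c (cos c) q = 0 :=
  Function.iterate_fixed (by
    rw [chainStep, sub_zero, div_self (cos_pos_of_mem_Ioo_zero_pi_div_two hc).ne',
      arccos_one]) _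

theorem cos_half_mem_Ioo (hc : c ∈ Ioo 0 (π / 2)) : cos (c / 2) ∈ Ioo 0 1 :=
  ⟨cos_pos_of_mem_Ioo ⟨by linarith [hc.1, pi_pos], by linarith [hc.2, pi_pos]⟩, by
    simpa using cos_lt_cos_of_nonneg_of_le_pi le_rfl (by linarith [hc.2, pi_pos]) (half_pos hc.1)⟩

theorem cos_lt_cos_half_sq (hc : c ∈ Ioo 0 (π / 2)) : cos c < cos (c / 2) ^ 2 := by
  have hdouble : cos c = 2 * cos (c / 2) ^ 2 - 1 := by rw [← cos_two_mul]; ring_nf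
  have h := cos_half_mem_Ioo hc
  nlinarith [h.1, h.2]

theorem angleChain_zero_lt_half_iff (hc : c ∈ Ioo 0 (π / 2)) (hE : E ∈ Ioc 0 (cos c)) :
    angleChain c E 0 < c / 2 ↔ cos (c / 2) * cos c < E := by
  have hcos : 0 < cos c := hE.1.trans_le hE.2
  have hmem : E / cos c ∈ Icc (-1) 1 :=
    ⟨by linarith [div_pos hE.1 hcos], (div_le_one hcos).2 hE.2⟩
  rw [angleChain_zero, chainStep, sub_zero, ← lt_div_iff₀ hcos]
  conv_lhs => rw [← arccos_cos (by linarith [hc.1] : 0 ≤ c / 2) (by linarith [hc.2, pi_pos])]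
  exact strictAntiOn_arccos.lt_iff_gt hmem ⟨by linarith [neg_one_le_cos (c / 2)], cos_le_one _⟩

theorem angleChain_zero_of_eq (hc : c ∈ Ioo 0 (π / 2)) :
    angleChain c (cos (c / 2) * cos c) 0 = c / 2 := by
  rw [angleChain_zero, chainStep, sub_zero,
    mul_div_cancel_right₀ _ (cos_pos_of_mem_Ioo_zero_pi_div_two hc).ne']
  exact arccos_cos (by linarith [hc.1]) (by linarith [hc.2, pi_pos])

theorem half_lt_angleChain_succ (hc : c ∈ Ioo 0 (π / 2)) (hE : E ∈ Ioo 0 (cos c)) {q : ℕ}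
    (hq : angleChain c E q = c / 2) : c / 2 < angleChain c E (q + 1) := by
  have hpos := (cos_half_mem_Ioo hc).1
  have hEh : E / cos (c / 2) < cos (c / 2) := by
    rw [div_lt_iff₀ hpos, ← sq]; exact hE.2.trans (cos_lt_cos_half_sq hc)
  rw [angleChain_succ, chainStep, hq, show c - c / 2 = c / 2 by ring]
  conv_lhs => rw [← arccos_cos (by linarith [hc.1] : 0 ≤ c / 2) (by linarith [hc.2, pi_pos])]
  exact strictAntiOn_arccos ⟨by linarith [div_pos hE.1 hpos], hEh.le.trans (cos_le_one _)⟩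
    ⟨by linarith [neg_one_le_cos (c / 2)], cos_le_one _⟩ hEh

theorem cos_chainStep_le (hc : c ∈ Ioo 0 (π / 2)) (hE : E ∈ Ioc 0 (cos c))
    (hu : u ∈ Icc 0 (arccos E)) (huc : u ≤ c) : cos (chainStep c E u) ≤ cos u - (cos c - E) := by
  have hd := cos_sub_pos hc hE hu
  have hprod : cos c ≤ cos u * cos (c - u) := by
    have hsum : cos c = cos u * cos (c - u) - sin u * sin (c - u) := by
      rw [← cos_add, add_sub_cancel]
    have := sin_nonneg_of_nonneg_of_le_pi hu.1 (by linarith [hc.2, pi_pos])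
    have := sin_nonneg_of_nonneg_of_le_pi (sub_nonneg.2 huc) (by linarith [hu.1, hc.2, pi_pos])
    nlinarith
  have hstep := cos_sub_mul_cos_chainStep hc hE hu
  have hd1 := cos_le_one (c - u)
  nlinarith [mul_nonneg (sub_nonneg.2 hE.2) (sub_nonneg.2 hd1)]

theorem exists_half_le_angleChain (hc : c ∈ Ioo 0 (π / 2)) (hE : E ∈ Ioo 0 (cos c)) :
    ∃ q, c / 2 ≤ angleChain c E q := by
  by_contra! h
  have hE' : E ∈ Ioc 0 (cos c) := ⟨hE.1, hE.2.le⟩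
  have bound : ∀ q : ℕ, cos (angleChain c E q) ≤ 1 - (q + 1) * (cos c - E) := by
    intro q
    induction q with
    | zero => simpa [angleChain_zero] using
        cos_chainStep_le hc hE' ⟨le_rfl, arccos_nonneg E⟩ hc.1.le
    | succ q ih =>
      have := cos_chainStep_le hc hE' (angleChain_mem_Icc hc hE' q) (by linarith [h q, hc.1])
      rw [angleChain_succ]
      push_cast
      linarith
  obtain ⟨q, hq⟩ := exists_nat_gt (1 / (cos c - E))
  rw [div_lt_iff₀ (sub_pos.2 hE.2)] at hq
  have hpos := cos_pos_of_mem_Ioo ⟨by linarith [(angleChain_mem_Icc hc hE' q).1, pi_pos],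
    angleChain_lt_pi_div_two hc hE' q⟩
  nlinarith [bound q]

theorem chainStep_le_chainStep (hc : c ∈ Ioo 0 (π / 2)) {E₁ E₂ u₁ u₂ : ℝ}
    (hE₂ : E₂ ∈ Ioc 0 (cos c)) (hE : E₁ ≤ E₂) (hu₂ : u₂ ∈ Icc 0 (arccos E₂)) (hu : u₂ ≤ u₁)
    (hu₁ : u₁ ≤ c) : chainStep c E₂ u₂ ≤ chainStep c E₁ u₁ := by
  have hd₂ := cos_sub_pos hc hE₂ hu₂
  have hd : cos (c - u₂) ≤ cos (c - u₁) :=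
    cos_le_cos_of_nonneg_of_le_pi (by linarith) (by linarith [hu₂.1, hc.2, pi_pos]) (by linarith)
  refine arccos_le_arccos ?_
  calc E₁ / cos (c - u₁) ≤ E₂ / cos (c - u₁) := div_le_div_of_nonneg_right hE (hd₂.trans_le hd).le
    _ ≤ E₂ / cos (c - u₂) := div_le_div_of_nonneg_left hE₂.1.le hd₂ hd

theorem angleChain_le_angleChain (hc : c ∈ Ioo 0 (π / 2)) {E₁ E₂ : ℝ}
    (hE₂ : E₂ ∈ Ioc 0 (cos c)) (hE : E₁ ≤ E₂) {n : ℕ} (hn : ∀ q < n, angleChain c E₁ q ≤ c) :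
    ∀ q ≤ n, angleChain c E₂ q ≤ angleChain c E₁ q := by
  intro q
  induction q with
  | zero => exact fun _ => chainStep_le_chainStep hc hE₂ hE ⟨le_rfl, arccos_nonneg _⟩ le_rfl hc.1.le
  | succ q ih =>
    intro hq
    rw [angleChain_succ, angleChain_succ]
    exact chainStep_le_chainStep hc hE₂ hE (angleChain_mem_Icc hc hE₂ q) (ih (by omega))
      (hn q (by omega))

theorem angleChain_succ_eq_sub (hc : c ∈ Ioo 0 (π / 2)) (hE : E ∈ Ioc 0 (cos c))
    {m : ℕ} (hm : angleChain c E m ≤ c) (h : cos (c - angleChain c E m) ^ 2 = E) :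
    angleChain c E (m + 1) = c - angleChain c E m := by
  have hmem := angleChain_mem_Icc hc hE m
  have hdiv : E / cos (c - angleChain c E m) = cos (c - angleChain c E m) := by
    rw [div_eq_iff (cos_sub_pos hc hE hmem).ne', ← sq, h]
  rw [angleChain_succ, chainStep, hdiv]
  exact arccos_cos (sub_nonneg.2 hm) (by linarith [hmem.1, hc.2, pi_pos])

end AngleChain

def belowHalf (c : ℝ) (n : ℕ) : Set ℝ :=
  {E | E ∈ Ioo 0 (cos c) ∧ ∀ q ≤ n, angleChain c E q < c / 2}

structure IsThreshold (c : ℝ) (n : ℕ) (σ : ℝ) : Prop where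
  pos : 0 < σ
  lt_cos : σ < cos c
  angleChain_eq : angleChain c σ n = c / 2
  belowHalf_eq : belowHalf c n = Ioo σ (cos c)

noncomputable def threshold (c : ℝ) (n : ℕ) : ℝ := sInf (belowHalf c n)

section Threshold

variable {c E σ : ℝ} {n : ℕ}

theorem mem_belowHalf_succ :
    E ∈ belowHalf c (n + 1) ↔ E ∈ belowHalf c n ∧ angleChain c E (n + 1) < c / 2 :=
  ⟨fun h => ⟨⟨h.1, fun q hq => h.2 q (by omega)⟩, h.2 _ le_rfl⟩,
    fun h => ⟨h.1.1, fun q hq => (Nat.le_succ_iff.1 hq).elim (h.1.2 q) (· ▸ h.2)⟩⟩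

theorem mem_belowHalf_of_le (hc : c ∈ Ioo 0 (π / 2)) {E₁ E₂ : ℝ} (h₁ : E₁ ∈ belowHalf c n)
    (hE : E₁ ≤ E₂) (h₂ : E₂ < cos c) : E₂ ∈ belowHalf c n := by
  have hE₂ : E₂ ∈ Ioc 0 (cos c) := ⟨h₁.1.1.trans_le hE, h₂.le⟩
  refine ⟨⟨hE₂.1, h₂⟩, fun q hq => ?_⟩
  refine (angleChain_le_angleChain hc hE₂ hE (fun r hr => ?_) q hq).trans_lt (h₁.2 q hq)
  linarith [h₁.2 r hr.le, hc.1]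

theorem isThreshold_zero (hc : c ∈ Ioo 0 (π / 2)) : IsThreshold c 0 (cos (c / 2) * cos c) := by
  have hcos : 0 < cos c := cos_pos_of_mem_Ioo_zero_pi_div_two hc
  have hL : cos (c / 2) * cos c < cos c := mul_lt_of_lt_one_left hcos (cos_half_mem_Ioo hc).2
  have hL₀ : 0 < cos (c / 2) * cos c := mul_pos (cos_half_mem_Ioo hc).1 hcos
  refine ⟨hL₀, hL, angleChain_zero_of_eq hc, Set.ext fun E => ?_⟩
  simp only [belowHalf, Nat.le_zero, forall_eq, mem_Ioo]
  constructor
  · rintro ⟨hE, h⟩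
    exact ⟨(angleChain_zero_lt_half_iff hc ⟨hE.1, hE.2.le⟩).1 h, hE.2⟩
  · rintro hE
    exact ⟨⟨hL₀.trans hE.1, hE.2⟩, (angleChain_zero_lt_half_iff hc ⟨hL₀.trans hE.1, hE.2.le⟩).2 hE.1⟩

theorem IsThreshold.exists_succ (hc : c ∈ Ioo 0 (π / 2)) (h : IsThreshold c n σ) :
    ∃ σ', σ < σ' ∧ IsThreshold c (n + 1) σ' := by
  obtain ⟨s, hs, hfs, hiff⟩ := exists_crossing_of_upClosed_sublevel (t := c / 2)
    (f := fun E => angleChain c E (n + 1)) h.lt_cos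
    (fun E hE => (continuousAt_angleChain hc ⟨h.pos.trans_le hE.1, hE.2⟩ _).continuousWithinAt)
    (half_lt_angleChain_succ hc ⟨h.pos, h.lt_cos⟩ h.angleChain_eq)
    (by rw [angleChain_cos_self hc]; linarith [hc.1])
    (fun x hx y hy hxy hfx => (mem_belowHalf_succ.1 (mem_belowHalf_of_le hc
      (mem_belowHalf_succ.2 ⟨h.belowHalf_eq ▸ hx, hfx⟩) hxy hy.2)).2)
  refine ⟨s, hs.1, ⟨h.pos.trans hs.1, hs.2, hfs, Set.ext fun E => ?_⟩⟩
  rw [mem_belowHalf_succ, h.belowHalf_eq]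
  constructor
  · rintro ⟨hE, hlt⟩
    exact ⟨(hiff E hE).1 hlt, hE.2⟩
  · rintro hE
    have hE' : E ∈ Ioo σ (cos c) := ⟨hs.1.trans hE.1, hE.2⟩
    exact ⟨hE', (hiff E hE').2 hE.1⟩

theorem IsThreshold.threshold_eq (h : IsThreshold c n σ) : threshold c n = σ := by
  rw [threshold, h.belowHalf_eq, csInf_Ioo h.lt_cos]

theorem isThreshold_threshold (hc : c ∈ Ioo 0 (π / 2)) (n : ℕ) :
    IsThreshold c n (threshold c n) := by
  induction n with
  | zero => exact (isThreshold_zero hc).threshold_eq ▸ isThreshold_zero hc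
  | succ n ih =>
    obtain ⟨σ', -, hσ'⟩ := ih.exists_succ hc
    exact hσ'.threshold_eq ▸ hσ'

theorem threshold_lt_threshold_succ (hc : c ∈ Ioo 0 (π / 2)) (n : ℕ) :
    threshold c n < threshold c (n + 1) := by
  obtain ⟨σ', hlt, hσ'⟩ := (isThreshold_threshold hc n).exists_succ hc
  exact hσ'.threshold_eq ▸ hlt

theorem threshold_zero (hc : c ∈ Ioo 0 (π / 2)) : threshold c 0 = cos (c / 2) * cos c :=
  (isThreshold_zero hc).threshold_eq

theorem tendsto_threshold (hc : c ∈ Ioo 0 (π / 2)) :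
    Tendsto (threshold c) atTop (𝓝 (cos c)) := by
  refine tendsto_atTop_isLUB (strictMono_nat_of_lt_succ (threshold_lt_threshold_succ hc)).monotone
    ⟨?_, fun b hb => not_lt.1 fun hbc => ?_⟩
  · rintro _ ⟨n, rfl⟩
    exact (isThreshold_threshold hc n).lt_cos.le
  -- an energy `E ∈ (b, cos c)` eventually leaves `belowHalf`, hence lies below a threshold
  obtain ⟨E, hbE, hE⟩ := exists_between (max_lt hbc (cos_pos_of_mem_Ioo_zero_pi_div_two hc))
  have hE₀ : 0 < E := (le_max_right _ _).trans_lt hbE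
  obtain ⟨q, hq⟩ := exists_half_le_angleChain hc ⟨hE₀, hE⟩
  have hnot : E ∉ belowHalf c q := fun hmem => (hmem.2 q le_rfl).not_ge hq
  rw [(isThreshold_threshold hc q).belowHalf_eq] at hnot
  have : E ≤ threshold c q := not_lt.1 fun h => hnot ⟨h, hE⟩
  linarith [le_max_left b 0, hb ⟨q, rfl⟩]

theorem exists_cos_sub_angleChain_sq_eq (hc : c ∈ Ioo 0 (π / 2)) (m : ℕ) :
    ∃ ε ∈ Ioo (threshold c m) (threshold c (m + 1)), cos (c - angleChain c ε m) ^ 2 = ε := by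
  have h := isThreshold_threshold hc m
  have h' := isThreshold_threshold hc (m + 1)
  have hcont : ContinuousOn (fun E => cos (c - angleChain c E m) ^ 2 - E)
      (Icc (threshold c m) (threshold c (m + 1))) := fun E hE =>
    (((continuous_cos.continuousAt.comp (continuousAt_const.sub (continuousAt_angleChain hc
      ⟨h.pos.trans_le hE.1, hE.2.trans h'.lt_cos.le⟩ m))).pow 2).sub
      continuousAt_id).continuousWithinAt
  have hleft : 0 < cos (c - angleChain c (threshold c m) m) ^ 2 - threshold c m := by
    rw [h.angleChain_eq, show c - c / 2 = c / 2 by ring]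
    linarith [cos_lt_cos_half_sq hc, h.lt_cos]
  have hright : cos (c - angleChain c (threshold c (m + 1)) m) ^ 2 - threshold c (m + 1) < 0 := by
    have hprod := cos_sub_angleChain_mul_cos hc ⟨h'.pos, h'.lt_cos.le⟩ m
    rw [h'.angleChain_eq] at hprod
    have hk := cos_half_mem_Ioo hc
    have hlt : threshold c (m + 1) < cos (c / 2) ^ 2 := h'.lt_cos.trans (cos_lt_cos_half_sq hc)
    nlinarith [mul_pos h'.pos (sub_pos.2 hlt), pow_pos hk.1 2]
  obtain ⟨ε, hε, hfε⟩ := intermediate_value_Ioo' (threshold_lt_threshold_succ hc m).le hcont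
    ⟨hright, hleft⟩
  exact ⟨ε, hε, sub_eq_zero.1 hfε⟩

end Threshold

theorem two_pi_div_mem_Ioo {κ : ℕ} (hκ : 4 < κ) : 2 * π / κ ∈ Ioo 0 (π / 2) := by
  have : (4 : ℝ) < κ := by exact_mod_cast hκ
  refine ⟨by positivity, ?_⟩
  rw [div_lt_div_iff₀ (by linarith) (by norm_num)]
  nlinarith [pi_pos]

theorem theta2_of_mem_belowHalf {κ m : ℕ} (hκ : 4 < κ) {E lam : ℝ}
    (hE : E ∈ belowHalf (2 * π / κ) m) (hlam : 0 ≤ lam)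
    (hend : ∀ j : ℕ, 1 ≤ j → sin ((j * κ : ℕ) * angleChain (2 * π / κ) E (m + 1)) =
      -lam * sin ((j * κ : ℕ) * angleChain (2 * π / κ) E m)) :
    Theta2 (m + 1) κ E := by
  have hc := two_pi_div_mem_Ioo hκ
  have hE' : E ∈ Ioc 0 (cos (2 * π / κ)) := ⟨hE.1.1, hE.1.2.le⟩
  exact theta2_of_cos_mul_cos_chain (by omega) hE.1.1 hlam
    (fun q _ => ⟨(angleChain_mem_Icc hc hE' q).1, angleChain_lt_pi_div_two hc hE' q⟩)
    (fun q hq => (hE.2 q hq).trans (by linarith [hc.1]))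
    (cos_mul_cos_angleChain_zero hc hE') (fun q _ => cos_sub_angleChain_mul_cos hc hE' q) hend

theorem theta2_threshold_succ {κ : ℕ} (hκ : 4 < κ) (m : ℕ) :
    Theta2 (m + 1) κ (threshold (2 * π / κ) (m + 1)) := by
  have hc := two_pi_div_mem_Ioo hκ
  have h := isThreshold_threshold hc (m + 1)
  have hmem : threshold (2 * π / κ) (m + 1) ∈ belowHalf (2 * π / κ) m := by
    rw [(isThreshold_threshold hc m).belowHalf_eq]
    exact ⟨threshold_lt_threshold_succ hc m, h.lt_cos⟩
  refine theta2_of_mem_belowHalf hκ hmem le_rfl fun j _ => ?_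
  rw [h.angleChain_eq, neg_zero, zero_mul,
    show ((j * κ : ℕ) : ℝ) * (2 * π / κ / 2) = j * π by push_cast; field_simp]
  exact sin_nat_mul_pi j

theorem exists_theta2_mem_Ioo {κ : ℕ} (hκ : 4 < κ) (m : ℕ) :
    ∃ ε ∈ Ioo (threshold (2 * π / κ) m) (threshold (2 * π / κ) (m + 1)), Theta2 (m + 1) κ ε := by
  have hc := two_pi_div_mem_Ioo hκ
  obtain ⟨ε, hε, hsq⟩ := exists_cos_sub_angleChain_sq_eq hc m
  have hmem : ε ∈ belowHalf (2 * π / κ) m := by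
    rw [(isThreshold_threshold hc m).belowHalf_eq]
    exact ⟨hε.1, hε.2.trans (isThreshold_threshold hc (m + 1)).lt_cos⟩
  refine ⟨ε, hε, theta2_of_mem_belowHalf hκ hmem zero_le_one fun j _ => ?_⟩
  rw [angleChain_succ_eq_sub hc ⟨hmem.1.1, hmem.1.2.le⟩
    ((hmem.2 m le_rfl).le.trans (by linarith [hc.1])) hsq,
    sin_natCast_mul_two_pi_div_sub (by omega), neg_one_mul]

theorem increasing_sequence_of_thresholds_general (κ : ℕ) (hκ : 6 ≤ κ) :
    ∃ F : ℕ → ℝ,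
      (∀ m n : ℕ, 1 ≤ m → m < n → F m < F n) ∧
      (∀ n : ℕ, 1 ≤ n →
        Real.cos (π / κ) * Real.cos (2 * π / κ) < F n ∧ F n < Real.cos (2 * π / κ)) ∧
      Tendsto F atTop (nhds (Real.cos (2 * π / κ))) ∧
      (∀ n : ℕ, 1 ≤ n → Theta2 n κ (F (2 * n - 1)) ∧ Theta2 n κ (F (2 * n))) := by
  have hc := two_pi_div_mem_Ioo (by omega : 4 < κ)
  choose ε hε hεΘ using exists_theta2_mem_Ioo (by omega : 4 < κ)
  obtain ⟨F, hF, hF_eq, hF_mem⟩ := exists_strictMono_interleave hε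
  have hF_lt (k : ℕ) : F k < cos (2 * π / κ) :=
    (hF_mem k).2.trans (isThreshold_threshold hc _).lt_cos
  have hF_zero : F 0 = cos (π / κ) * cos (2 * π / κ) := by
    have h := (hF_eq 0).1.trans (threshold_zero hc)
    rwa [show 2 * π / κ / 2 = π / κ by ring] at h
  refine ⟨F, fun m n _ hmn => hF hmn, fun n hn => ⟨hF_zero ▸ hF (by omega), hF_lt n⟩, ?_,
    fun n hn => ?_⟩
  · exact tendsto_of_tendsto_of_tendsto_of_le_of_le
      ((tendsto_threshold hc).comp (Nat.tendsto_div_const_atTop two_ne_zero)) tendsto_const_nhds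
      (fun k => (hF_mem k).1) fun k => (hF_lt k).le
  · obtain ⟨m, rfl⟩ : ∃ m, n = m + 1 := ⟨n - 1, by omega⟩
    rw [show 2 * (m + 1) - 1 = 2 * m + 1 by omega, (hF_eq m).2, (hF_eq (m + 1)).1]
    exact ⟨hεΘ m, theta2_threshold_succ (by omega) m⟩

/-- There is a strictly increasing sequence of thresholds in
`(cos(π/κ)·cos(2π/κ), cos(2π/κ))` converging to `cos(2π/κ)`, with
`F_{2n-1}, F_{2n} ∈ 𝚯_{n,κ}`. -/
theorem increasing_sequence_of_thresholds (κ : ℕ) (hκ : 6 ≤ κ) (hke : Even κ) :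
    ∃ F : ℕ → ℝ,
      (∀ m n : ℕ, 1 ≤ m → m < n → F m < F n) ∧
      (∀ n : ℕ, 1 ≤ n →
        Real.cos (π / κ) * Real.cos (2 * π / κ) < F n ∧ F n < Real.cos (2 * π / κ)) ∧
      Tendsto F atTop (nhds (Real.cos (2 * π / κ))) ∧
      (∀ n : ℕ, 1 ≤ n → Theta2 n κ (F (2 * n - 1)) ∧ Theta2 n κ (F (2 * n))) :=
  increasing_sequence_of_thresholds_general κ hκ
end

section
/- Let d ∈ ℕ*, let κ be an even positive integer, and let m ∈ ℕ. If E ∈ 𝚯_{m,κ}(d) and c = ε·cos(jπ/κ) for some sign ε ∈ {−1, +1} and some integer j with 0 ≤ j ≤ κ/2 − 1, then c·E ∈ 𝚯_{m,κ}(d+1). -/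
open Real

/-- `g_{jκ}(x₁,…,x_d) = Σ_i (∏_{l≠i} x_l)(1-x_i²)U_{jκ-1}(x_i)` in dimension `d`. -/
noncomputable def gD (d j κ : ℕ) (x : Fin d → ℝ) : ℝ :=
  ∑ i : Fin d, (∏ l ∈ Finset.univ.erase i, x l) * (1 - x i ^ 2) * chebU (j * κ - 1) (x i)

/-- The constant energy surface `S_E(d)`. -/
def SE (d : ℕ) (E : ℝ) (x : Fin d → ℝ) : Prop :=
  (∀ l, x l ∈ Set.Icc (-1 : ℝ) 1) ∧ (∏ l, x l) = E

/-- `E ∈ 𝚯_{m,κ}(d)`; for `m = 0` this says there is `x ∈ S_E(d)` with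
`g_{jκ}(x) = 0` for all `j ≥ 1`. -/
def ThetaD (d m κ : ℕ) (E : ℝ) : Prop :=
  ∃ X : ℕ → (Fin d → ℝ), ∃ ω : ℕ → ℝ,
    (∀ q ≤ m, SE d E (X q)) ∧
    (∀ q < m, ω q ≤ 0) ∧
    (∀ j : ℕ, 1 ≤ j → gD d j κ (X m) = ∑ q ∈ Finset.range m, ω q * gD d j κ (X q))

/-! Appending a coordinate `c` to a point `x ∈ S_E(d)` gives a point of `S_{cE}(d+1)`, and
`g_{nκ}(x, c) = c · g_{nκ}(x) + E · (1 - c²) U_{nκ-1}(c)`. Since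
`(1 - cos² θ) U_{N-1}(cos θ) = sin θ · sin (N θ)` and `U_{N-1}` has the parity of `N - 1`, the
second term vanishes for every `n` when `c = ±cos(jπ/κ)`, so the same weights `ω` witness
`cE ∈ 𝚯_{m,κ}(d+1)`. -/

theorem one_sub_sq_mul_chebU_cos (N : ℕ) (θ : ℝ) :
    (1 - cos θ ^ 2) * chebU N (cos θ) = sin θ * sin ((N + 1) * θ) := by
  have h := Polynomial.Chebyshev.U_real_cos θ N
  push_cast at h
  rw [← h, ← sin_sq, chebU]
  ring

theorem one_sub_sq_mul_chebU_cos_pi_div (k N : ℕ) :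
    (1 - cos (k * π / N) ^ 2) * chebU (N - 1) (cos (k * π / N)) = 0 := by
  rcases N with _ | M
  · simp -- `k * π / 0 = 0`, so the point is `cos 0 = 1`
  · rw [one_sub_sq_mul_chebU_cos, Nat.add_sub_cancel, Nat.cast_succ,
      mul_div_cancel₀ _ (by positivity), sin_nat_mul_pi, mul_zero]

theorem one_sub_sq_mul_chebU_neg_eq_zero_iff (N : ℕ) (x : ℝ) :
    (1 - (-x) ^ 2) * chebU N (-x) = 0 ↔ (1 - x ^ 2) * chebU N x = 0 := by
  simp [chebU, Polynomial.Chebyshev.U_eval_neg]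

theorem one_sub_sq_mul_chebU_sign_mul_cos_eq_zero {ε : ℝ} (hε : ε = 1 ∨ ε = -1)
    (j κ n : ℕ) (hn : n ≠ 0) :
    (1 - (ε * cos (j * π / κ)) ^ 2) * chebU (n * κ - 1) (ε * cos (j * π / κ)) = 0 := by
  have hcos : cos (j * π / κ) = cos ((n * j : ℕ) * π / (n * κ : ℕ)) := by
    push_cast
    rw [mul_assoc, mul_div_mul_left _ _ (by exact_mod_cast hn)]
  rcases hε with rfl | rfl
  · rw [one_mul, hcos]
    exact one_sub_sq_mul_chebU_cos_pi_div _ _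
  · rw [neg_one_mul, one_sub_sq_mul_chebU_neg_eq_zero_iff, hcos]
    exact one_sub_sq_mul_chebU_cos_pi_div _ _

section snoc

variable {M : Type*} [CommMonoid M] {d : ℕ}

open Finset

theorem Fin.prod_erase_last_snoc (x : Fin d → M) (y : M) :
    ∏ l ∈ univ.erase (Fin.last d), Fin.snoc x y l = ∏ i, x i := by
  rw [Fin.univ_castSuccEmb, erase_cons, prod_map]
  simp only [Fin.coe_castSuccEmb, Fin.snoc_castSucc]

theorem Fin.prod_erase_castSucc_snoc (x : Fin d → M) (y : M) (i : Fin d) :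
    ∏ l ∈ univ.erase i.castSucc, Fin.snoc x y l = y * ∏ l ∈ univ.erase i, x l := by
  rw [Fin.univ_castSuccEmb, erase_cons_of_ne _ (Fin.castSucc_ne_last i).symm, Finset.prod_cons,
    ← Fin.coe_castSuccEmb, ← map_erase, prod_map, Fin.snoc_last]
  simp only [Fin.coe_castSuccEmb, Fin.snoc_castSucc]

end snoc

theorem gD_snoc (d j κ : ℕ) (x : Fin d → ℝ) (y : ℝ) :
    gD (d + 1) j κ (Fin.snoc x y) =
      y * gD d j κ x + (∏ l, x l) * ((1 - y ^ 2) * chebU (j * κ - 1) y) := by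
  simp only [gD, Fin.sum_univ_castSucc, Fin.snoc_castSucc, Fin.snoc_last,
    Fin.prod_erase_last_snoc, Fin.prod_erase_castSucc_snoc, Finset.mul_sum]
  congr 1
  · exact Finset.sum_congr rfl fun i _ ↦ by ring
  · ring

theorem SE.snoc {d : ℕ} {E y : ℝ} {x : Fin d → ℝ} (hx : SE d E x) (hy : y ∈ Set.Icc (-1) 1) :
    SE (d + 1) (y * E) (Fin.snoc x y) := by
  refine ⟨Fin.lastCases (by simpa using hy) fun i ↦ by simpa using hx.1 i, ?_⟩
  rw [Fin.prod_snoc, hx.2, mul_comm]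

theorem ThetaD.snoc {d m κ : ℕ} {E c : ℝ} (hE : ThetaD d m κ E) (hc : c ∈ Set.Icc (-1) 1)
    (hcU : ∀ n, 1 ≤ n → (1 - c ^ 2) * chebU (n * κ - 1) c = 0) :
    ThetaD (d + 1) m κ (c * E) := by
  obtain ⟨X, ω, hX, hω, hg⟩ := hE
  have hgD : ∀ n, 1 ≤ n → ∀ q, gD (d + 1) n κ (Fin.snoc (X q) c) = c * gD d n κ (X q) :=
    fun n hn q ↦ by rw [gD_snoc, hcU n hn, mul_zero, add_zero]
  refine ⟨fun q ↦ Fin.snoc (X q) c, ω, fun q hq ↦ (hX q hq).snoc hc, hω, fun n hn ↦ ?_⟩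
  simp only [hgD n hn, hg n hn, Finset.mul_sum, mul_left_comm c]

theorem threshold_dimension_shift_general (d κ m : ℕ)
    (E : ℝ) (hE : ThetaD d m κ E) (ε : ℝ) (hε : ε = 1 ∨ ε = -1)
    (j : ℕ) (c : ℝ) (hc : c = ε * Real.cos (j * π / κ)) :
    ThetaD (d + 1) m κ (c * E) := by
  have hε_abs : |ε| = 1 := by rcases hε with rfl | rfl <;> simp
  have hc_mem : c ∈ Set.Icc (-1) 1 := by
    rw [Set.mem_Icc, ← abs_le, hc, abs_mul, hε_abs, one_mul]
    exact abs_cos_le_one _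
  subst hc
  exact hE.snoc hc_mem fun n hn ↦
    one_sub_sq_mul_chebU_sign_mul_cos_eq_zero hε j κ n (Nat.one_le_iff_ne_zero.mp hn)

/-- Thresholds in dimension `d` generate thresholds in dimension `d+1` by
scaling with `±cos(jπ/κ)`, `0 ≤ j ≤ κ/2 - 1`. -/
theorem threshold_dimension_shift (d κ m : ℕ) (hd : 1 ≤ d) (hκ : 1 ≤ κ) (hke : Even κ)
    (E : ℝ) (hE : ThetaD d m κ E) (ε : ℝ) (hε : ε = 1 ∨ ε = -1)
    (j : ℕ) (hj : j ≤ κ / 2 - 1) (c : ℝ) (hc : c = ε * Real.cos (j * π / κ)) :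
    ThetaD (d + 1) m κ (c * E) :=
  threshold_dimension_shift_general d κ m E hE ε hε j c hc
end

section
/- Let κ ∈ ℕ* with κ ≥ 2, and let x, y ∈ ℝ be such that U_{κ−1}(x) ≠ 0 and U_{κ−1}(y) ≠ 0. Then T_κ(x) = T_κ(y) if and only if U_{ακ−1}(x)·U_{βκ−1}(y) − U_{ακ−1}(y)·U_{βκ−1}(x) = 0 for all α, β ∈ ℕ*. -/
open Real

/-!
Since `U_{n-1}(cos θ) = sin(nθ) / sin θ`, one has `U_{ακ-1} = U_{α-1}(T_κ) · U_{κ-1}`; as a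
polynomial identity it follows by induction on `α` from the product formula
`2 T_k U_m = U_{m+k} + U_{m-k}`. Hence each commutator is `U_{κ-1}(x) U_{κ-1}(y)` times the
commutator of `U_{α-1}` and `U_{β-1}` at `(T_κ(x), T_κ(y))`, which vanishes when
`T_κ(x) = T_κ(y)`; conversely, for `α = 2`, `β = 1` the latter is `2 (T_κ(x) - T_κ(y))`.
-/

namespace Polynomial.Chebyshev

variable (R : Type*) [CommRing R]

theorem T_mul_U (m k : ℤ) : 2 * T R k * U R m = U R (m + k) + U R (m - k) := by
  induction k using Polynomial.Chebyshev.induct with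
  | zero => simp [two_mul]
  | one => rw [T_one]; linear_combination (norm := ring_nf) -(U_add_one R m)
  | add_two k ih1 ih2 =>
    have h₁ := U_add_two R (m + k)
    have h₂ := U_sub_two R (m - k)
    have h₃ := T_add_two R k
    linear_combination (norm := ring_nf) 2 * U R m * h₃ - h₂ - h₁ - ih2 + 2 * (X : R[X]) * ih1
  | neg_add_one k ih1 ih2 =>
    have h₁ := U_add_two R (m + (-k - 1))
    have h₂ := U_sub_two R (m - (-k - 1))
    have h₃ := T_add_two R (-k - 1)
    linear_combination (norm := ring_nf) 2 * U R m * h₃ - h₂ - h₁ - ih2 + 2 * (X : R[X]) * ih1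

theorem U_mul_sub_one (m n : ℤ) :
    U R (m * n - 1) = (U R (m - 1)).comp (T R n) * U R (n - 1) := by
  induction m using Polynomial.Chebyshev.induct with
  | zero => simp [U_neg_one]
  | one => simp
  | add_two m ih1 ih2 =>
    have h₁ := T_mul_U R ((m + 1) * n - 1) n
    have h₂ := congr_arg (comp · (T R n)) <| U_add_two R (m - 1)
    simp only [sub_comp, mul_comp, ofNat_comp, X_comp] at h₂
    linear_combination (norm := ring_nf) -h₁ + 2 * T R n * ih1 - ih2 - U R (n - 1) * h₂
  | neg_add_one m ih1 ih2 =>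
    have h₁ := T_mul_U R (-m * n - 1) n
    have h₂ := congr_arg (comp · (T R n)) <| U_add_two R (-m - 2)
    simp only [sub_comp, mul_comp, ofNat_comp, X_comp] at h₂
    linear_combination (norm := ring_nf) -h₁ + 2 * T R n * ih1 - ih2 - U R (n - 1) * h₂

end Polynomial.Chebyshev

open Polynomial Polynomial.Chebyshev

theorem chebU_zero (x : ℝ) : chebU 0 x = 1 := by
  simp [chebU]

theorem chebU_one (x : ℝ) : chebU 1 x = 2 * x := by
  simp [chebU]

theorem chebU_mul_sub_one {a κ : ℕ} (ha : 1 ≤ a) (hκ : 1 ≤ κ) (x : ℝ) :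
    chebU (a * κ - 1) x = chebU (a - 1) (chebT κ x) * chebU (κ - 1) x := by
  have haκ : 1 ≤ a * κ := Nat.one_le_iff_ne_zero.2 (by positivity)
  simp only [chebU, chebT, Nat.cast_sub haκ, Nat.cast_sub ha, Nat.cast_sub hκ, Nat.cast_mul,
    Nat.cast_one, U_mul_sub_one, eval_mul, eval_comp]

theorem chebU_mul_sub_one_commutator {a b κ : ℕ} (ha : 1 ≤ a) (hb : 1 ≤ b) (hκ : 1 ≤ κ)
    (x y : ℝ) :
    chebU (a * κ - 1) x * chebU (b * κ - 1) y - chebU (a * κ - 1) y * chebU (b * κ - 1) x =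
      chebU (κ - 1) x * chebU (κ - 1) y *
        (chebU (a - 1) (chebT κ x) * chebU (b - 1) (chebT κ y)
          - chebU (a - 1) (chebT κ y) * chebU (b - 1) (chebT κ x)) := by
  simp only [chebU_mul_sub_one ha hκ, chebU_mul_sub_one hb hκ]
  ring

/-- For `U_{κ-1}(x), U_{κ-1}(y) ≠ 0`: `T_κ(x) = T_κ(y)` iff all the commutators
`[U_{ακ-1}(x), U_{βκ-1}(y)]` vanish. -/
theorem chebT_eq_iff_commutators_vanish (κ : ℕ) (hκ : 2 ≤ κ) (x y : ℝ)
    (hx : chebU (κ - 1) x ≠ 0) (hy : chebU (κ - 1) y ≠ 0) :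
    chebT κ x = chebT κ y ↔
      ∀ α β : ℕ, 1 ≤ α → 1 ≤ β →
        chebU (α * κ - 1) x * chebU (β * κ - 1) y
          - chebU (α * κ - 1) y * chebU (β * κ - 1) x = 0 := by
  have hκ1 : 1 ≤ κ := by omega
  constructor
  · intro hT α β hα hβ
    rw [chebU_mul_sub_one_commutator hα hβ hκ1, hT, sub_self, mul_zero]
  · intro h
    have h21 := h 2 1 (by norm_num) le_rfl
    rw [chebU_mul_sub_one_commutator (by norm_num) le_rfl hκ1] at h21
    simp only [Nat.reduceSub, chebU_zero, chebU_one] at h21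
    have hdiff : chebU (κ - 1) x * chebU (κ - 1) y * 2 * (chebT κ x - chebT κ y) = 0 := by
      linear_combination h21
    exact sub_eq_zero.1 ((mul_eq_zero.1 hdiff).resolve_left (by positivity))
end
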